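/- Let 𝒯 be a regular T-mesh with F cells, V⁺ crossing vertices, and E interior l-edges. Then F = V⁺ + E + 1. -/

import Mathlib

open Filter Set MeasureTheory
open scoped Topology

noncomputable section

/-- A closed axis-aligned rectangle with positive side lengths. -/
structure Rect where
  xmin : ℝ
  xmax : ℝ
  ymin : ℝ
  ymax : ℝ
  hx : xmin < xmax
  hy : ymin < ymax

/-- The set of points of a rectangle. -/
def Rect.toSet (c : Rect) : Set (ℝ × ℝ) :=
  Set.Icc c.xmin c.xmax ×ˢ Set.Icc c.ymin c.ymax

/-- A regular T-mesh: finitely many cells (closed axis-aligned rectangles) with pairwise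
disjoint interiors whose union is a closed axis-aligned rectangle. -/
structure TMesh where
  cells : Set Rect
  outer : Rect
  finite_cells : cells.Finite
  pairwise_disjoint : cells.Pairwise fun c d => Disjoint (interior c.toSet) (interior d.toSet)
  union_eq : (⋃ c ∈ cells, c.toSet) = outer.toSet

/-- The region occupied by a T-mesh. -/
def TMesh.Omega (T : TMesh) : Set (ℝ × ℝ) := T.outer.toSet

/-- The edge skeleton of a T-mesh: the union of the boundaries of all cells. -/
def TMesh.skeleton (T : TMesh) : Set (ℝ × ℝ) := ⋃ c ∈ T.cells, frontier c.toSet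

/-- A vertex of the mesh: a corner of some cell. -/
def IsVertexOf (T : TMesh) (p : ℝ × ℝ) : Prop :=
  ∃ c ∈ T.cells, (p.1 = c.xmin ∨ p.1 = c.xmax) ∧ (p.2 = c.ymin ∨ p.2 = c.ymax)

/-- A crossing vertex: an interior vertex from which four small axis-parallel segments
stay inside the edge skeleton. -/
def IsCrossingVertex (T : TMesh) (p : ℝ × ℝ) : Prop :=
  IsVertexOf T p ∧ p ∈ interior T.Omega ∧
    ∃ ε > (0 : ℝ), segment ℝ p (p + (ε, 0)) ⊆ T.skeleton ∧
      segment ℝ p (p - (ε, 0)) ⊆ T.skeleton ∧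
      segment ℝ p (p + (0, ε)) ⊆ T.skeleton ∧
      segment ℝ p (p - (0, ε)) ⊆ T.skeleton

/-- A horizontal closed segment of positive length. -/
def IsHorizSeg (s : Set (ℝ × ℝ)) : Prop :=
  ∃ a b y : ℝ, a < b ∧ s = Set.Icc a b ×ˢ ({y} : Set ℝ)

/-- A vertical closed segment of positive length. -/
def IsVertSeg (s : Set (ℝ × ℝ)) : Prop :=
  ∃ x a b : ℝ, a < b ∧ s = ({x} : Set ℝ) ×ˢ Set.Icc a b

/-- An l-edge: a maximal axis-parallel closed segment of positive length contained in the
edge skeleton. -/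
def IsLEdge (T : TMesh) (s : Set (ℝ × ℝ)) : Prop :=
  (IsHorizSeg s ∨ IsVertSeg s) ∧ s ⊆ T.skeleton ∧
    ∀ s', (IsHorizSeg s' ∨ IsVertSeg s') → s' ⊆ T.skeleton → s ⊆ s' → s' = s

def IsBoundaryLEdge (T : TMesh) (s : Set (ℝ × ℝ)) : Prop :=
  IsLEdge T s ∧ s ⊆ frontier T.Omega

def IsInteriorLEdge (T : TMesh) (s : Set (ℝ × ℝ)) : Prop :=
  IsLEdge T s ∧ ¬ s ⊆ frontier T.Omega

/-- There is a horizontal l-edge with endpoints `(a,y)`, `(b,y)`. -/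
def HorizLEdgeAt (T : TMesh) (a b y : ℝ) : Prop :=
  a < b ∧ IsLEdge T (Set.Icc a b ×ˢ ({y} : Set ℝ))

/-- The number `V⁺` of crossing vertices. -/
def crossingCount (T : TMesh) : ℕ := {p | IsCrossingVertex T p}.ncard

/-- The number `E` of interior l-edges. -/
def interiorLEdgeCount (T : TMesh) : ℕ := {s | IsInteriorLEdge T s}.ncard

/-- The number `F` of cells. -/
def cellCount (T : TMesh) : ℕ := T.cells.ncard

/-! Partial derivatives (within a set) and smoothness. -/

def pdXW (S : Set (ℝ × ℝ)) (f : ℝ × ℝ → ℝ) : ℝ × ℝ → ℝ :=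
  fun p => derivWithin (fun x => f (x, p.2)) {x | (x, p.2) ∈ S} p.1

def pdYW (S : Set (ℝ × ℝ)) (f : ℝ × ℝ → ℝ) : ℝ × ℝ → ℝ :=
  fun p => derivWithin (fun y => f (p.1, y)) {y | (p.1, y) ∈ S} p.2

/-- The mixed partial derivative `∂^{i+j} f/∂x^i∂y^j`, taken within the set `S`. -/
def mpW (S : Set (ℝ × ℝ)) (i j : ℕ) (f : ℝ × ℝ → ℝ) : ℝ × ℝ → ℝ :=
  (pdYW S)^[j] ((pdXW S)^[i] f)

/-- `f` has continuous mixed partials `∂^{i+j}f/∂x^i∂y^j` on `S` for all `0 ≤ i ≤ α`,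
`0 ≤ j ≤ β` (smoothness indices `α, β ∈ ℤ` may be `-1`, in which case nothing is required
in that variable). -/
def SmoothWithin (S : Set (ℝ × ℝ)) (α β : ℤ) (f : ℝ × ℝ → ℝ) : Prop :=
  (∀ i j : ℕ, (i : ℤ) ≤ α → (j : ℤ) ≤ β → ContinuousOn (mpW S i j f) S) ∧
  (∀ i : ℕ, (i : ℤ) < α → ∀ p ∈ S,
    HasDerivWithinAt (fun x => (pdXW S)^[i] f (x, p.2)) ((pdXW S)^[i+1] f p)
      {x | (x, p.2) ∈ S} p.1) ∧
  (∀ i j : ℕ, (i : ℤ) ≤ α → (j : ℤ) < β → ∀ p ∈ S,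
    HasDerivWithinAt (fun y => mpW S i j f (p.1, y)) (mpW S i (j+1) f p)
      {y | (p.1, y) ∈ S} p.2)

/-- `f` agrees on each cell of `T` with a polynomial of bidegree at most `(m,n)`. -/
def PiecewisePoly (m n : ℕ) (T : TMesh) (f : ℝ × ℝ → ℝ) : Prop :=
  ∀ c ∈ T.cells, ∃ p : MvPolynomial (Fin 2) ℝ,
    p.degreeOf 0 ≤ m ∧ p.degreeOf 1 ≤ n ∧
    ∀ q ∈ c.toSet, f q = MvPolynomial.eval ![q.1, q.2] p

/-- The spline space with homogeneous boundary conditions `S̄(m,n,α,β,T)`. -/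
def SBar (m n : ℕ) (α β : ℤ) (T : TMesh) : Set (ℝ × ℝ → ℝ) :=
  {f | (∀ p, p ∉ T.Omega → f p = 0) ∧ PiecewisePoly m n T f ∧ SmoothWithin Set.univ α β f}

/-- The spline space `S(m,n,α,β,T)` over the T-mesh: membership only constrains the values
on the occupied region `Ω` (smoothness is required within `Ω`). -/
def SOn (m n : ℕ) (α β : ℤ) (T : TMesh) : Set (ℝ × ℝ → ℝ) :=
  {f | PiecewisePoly m n T f ∧ SmoothWithin T.Omega α β f}

/-- The set of functions `S` is a linear space of dimension `d`. -/
def HasDim (S : Set (ℝ × ℝ → ℝ)) (d : ℕ) : Prop :=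
  ∃ b : Fin d → (ℝ × ℝ → ℝ), (∀ i, b i ∈ S) ∧ LinearIndependent ℝ b ∧
    ∀ f ∈ S, ∃ c : Fin d → ℝ, f = ∑ i, c i • b i

/-- The linear space `S` has dimension at least `d`. -/
def DimGE (S : Set (ℝ × ℝ → ℝ)) (d : ℕ) : Prop :=
  ∃ b : Fin d → (ℝ × ℝ → ℝ), (∀ i, b i ∈ S) ∧ LinearIndependent ℝ b

/-- The set of functions `S`, regarded as a space of functions on `Ω` (i.e. modulo the
values outside `Ω`), has dimension `d`. -/
def HasDimOn (Ω : Set (ℝ × ℝ)) (S : Set (ℝ × ℝ → ℝ)) (d : ℕ) : Prop :=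
  ∃ b : Fin d → (ℝ × ℝ → ℝ), (∀ i, b i ∈ S) ∧
    LinearIndependent ℝ (fun i => Ω.restrict (b i)) ∧
    ∀ f ∈ S, ∃ c : Fin d → ℝ, Set.EqOn f (∑ i, c i • b i) Ω

/-! The integration operator `I` and one-sided limits. -/

/-- `I(g)(x,y) = ∫_{-∞}^x ∫_{-∞}^y g(s,t) dt ds`. -/
def Ig (g : ℝ × ℝ → ℝ) : ℝ × ℝ → ℝ :=
  fun p => ∫ s in Set.Iic p.1, (∫ t in Set.Iic p.2, g (s, t))

/-- `g(s, y−)`, the one-sided limit from below in the second variable. -/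
def limBelowY (g : ℝ × ℝ → ℝ) (y s : ℝ) : ℝ := limUnder (𝓝[<] y) fun t => g (s, t)
/-- `g(s, y+)`. -/
def limAboveY (g : ℝ × ℝ → ℝ) (y s : ℝ) : ℝ := limUnder (𝓝[>] y) fun t => g (s, t)
/-- `g(x−, t)`. -/
def limLeftX (g : ℝ × ℝ → ℝ) (x t : ℝ) : ℝ := limUnder (𝓝[<] x) fun s => g (s, t)
/-- `g(x+, t)`. -/
def limRightX (g : ℝ × ℝ → ℝ) (x t : ℝ) : ℝ := limUnder (𝓝[>] x) fun s => g (s, t)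

/-- The (cell-wise) partial derivative in `x`. -/
def pdX (f : ℝ × ℝ → ℝ) : ℝ × ℝ → ℝ := fun p => deriv (fun x => f (x, p.2)) p.1
/-- The (cell-wise) partial derivative in `y`. -/
def pdY (f : ℝ × ℝ → ℝ) : ℝ × ℝ → ℝ := fun p => deriv (fun y => f (p.1, y)) p.2

/-- The union of the open interiors of the cells. -/
def cellInteriors (T : TMesh) : Set (ℝ × ℝ) := ⋃ c ∈ T.cells, interior c.toSet

open Classical in
/-- The cell-wise mixed partial derivative `∂²f/∂x∂y`, set to `0` off the cell interiors. -/
def Dmix (T : TMesh) (f : ℝ × ℝ → ℝ) : ℝ × ℝ → ℝ :=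
  fun p => if p ∈ cellInteriors T then pdX (pdY f) p else 0

/-! Extended T-meshes. -/

/-- The skeleton of a tensor-product mesh with grid lines `X 0 < ⋯ < X (2m+1)` and
`Y 0 < ⋯ < Y (2n+1)`. -/
def gridSkeleton (m n : ℕ) (X Y : ℕ → ℝ) : Set (ℝ × ℝ) :=
  {p : ℝ × ℝ | (∃ i ≤ 2 * m + 1, p.1 = X i) ∧ Y 0 ≤ p.2 ∧ p.2 ≤ Y (2 * n + 1)} ∪
  {p : ℝ × ℝ | (∃ j ≤ 2 * n + 1, p.2 = Y j) ∧ X 0 ≤ p.1 ∧ p.1 ≤ X (2 * m + 1)}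

/-- The straight extensions, up to the rectangle `[x0,x1] × [y0,y1]`, of every l-edge of `T`
having an endpoint on the boundary of the region of `T`. -/
def extSegs (T : TMesh) (x0 x1 y0 y1 : ℝ) : Set (ℝ × ℝ) :=
  {p : ℝ × ℝ | ∃ a b y, HorizLEdgeAt T a b y ∧ a = T.outer.xmin ∧
      p.2 = y ∧ x0 ≤ p.1 ∧ p.1 ≤ a} ∪
  {p : ℝ × ℝ | ∃ a b y, HorizLEdgeAt T a b y ∧ b = T.outer.xmax ∧
      p.2 = y ∧ b ≤ p.1 ∧ p.1 ≤ x1} ∪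
  {p : ℝ × ℝ | ∃ x a b, a < b ∧ IsLEdge T (({x} : Set ℝ) ×ˢ Set.Icc a b) ∧ a = T.outer.ymin ∧
      p.1 = x ∧ y0 ≤ p.2 ∧ p.2 ≤ a} ∪
  {p : ℝ × ℝ | ∃ x a b, a < b ∧ IsLEdge T (({x} : Set ℝ) ×ˢ Set.Icc a b) ∧ b = T.outer.ymax ∧
      p.1 = x ∧ b ≤ p.2 ∧ p.2 ≤ y1}

/-- `Te` is an extension of `T` associated with `S(m,n,m-1,n-1,T)`: a tensor-product mesh with
`2(m+1)` vertical and `2(n+1)` horizontal grid lines whose central rectangle is the region of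
`T`, together with `T` and the straight extensions of all boundary-reaching edges of `T`. -/
def IsExtensionOf (m n : ℕ) (T Te : TMesh) : Prop :=
  ∃ X Y : ℕ → ℝ,
    (∀ i < 2 * m + 1, X i < X (i + 1)) ∧ (∀ j < 2 * n + 1, Y j < Y (j + 1)) ∧
    X m = T.outer.xmin ∧ X (m + 1) = T.outer.xmax ∧
    Y n = T.outer.ymin ∧ Y (n + 1) = T.outer.ymax ∧
    Te.outer.xmin = X 0 ∧ Te.outer.xmax = X (2 * m + 1) ∧
    Te.outer.ymin = Y 0 ∧ Te.outer.ymax = Y (2 * n + 1) ∧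
    Te.skeleton = T.skeleton ∪ gridSkeleton m n X Y ∪
      extSegs T (X 0) (X (2 * m + 1)) (Y 0) (Y (2 * n + 1))

/-! Hierarchical T-meshes. -/

/-- `T` is a tensor-product mesh. -/
def IsTensorMesh (T : TMesh) : Prop :=
  ∃ (p q : ℕ) (x y : ℕ → ℝ), 0 < p ∧ 0 < q ∧
    (∀ i < p, x i < x (i + 1)) ∧ (∀ j < q, y j < y (j + 1)) ∧
    T.cells = {c : Rect | ∃ i < p, ∃ j < q,
      c.xmin = x i ∧ c.xmax = x (i + 1) ∧ c.ymin = y j ∧ c.ymax = y (j + 1)}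

/-- The four equal subcells obtained by subdividing a cell by the two segments joining the
midpoints of opposite edges. -/
def Rect.quads (c : Rect) : Set Rect :=
  { ⟨c.xmin, (c.xmin + c.xmax) / 2, c.ymin, (c.ymin + c.ymax) / 2,
      by linarith [c.hx], by linarith [c.hy]⟩,
    ⟨(c.xmin + c.xmax) / 2, c.xmax, c.ymin, (c.ymin + c.ymax) / 2,
      by linarith [c.hx], by linarith [c.hy]⟩,
    ⟨c.xmin, (c.xmin + c.xmax) / 2, (c.ymin + c.ymax) / 2, c.ymax,
      by linarith [c.hx], by linarith [c.hy]⟩,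
    ⟨(c.xmin + c.xmax) / 2, c.xmax, (c.ymin + c.ymax) / 2, c.ymax,
      by linarith [c.hx], by linarith [c.hy]⟩ }

/-- `T'` is obtained from `T` by subdividing exactly the cells in `S` into four quadrants. -/
def StepSubdiv (T T' : TMesh) (S : Set Rect) : Prop :=
  S ⊆ T.cells ∧ T'.outer = T.outer ∧
    T'.cells = (T.cells \ S) ∪ ⋃ c ∈ S, Rect.quads c

/-- A hierarchical T-mesh: the recursive construction `𝒯⁰, 𝒯¹, …, 𝒯^M`. -/
structure HierMesh where
  M : ℕ
  level : ℕ → TMesh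
  subdivided : ℕ → Set Rect
  tensor0 : IsTensorMesh (level 0)
  step : ∀ k < M, StepSubdiv (level k) (level (k + 1)) (subdivided k)

/-- The final mesh `𝒯 = 𝒯^M`. -/
def HierMesh.final (H : HierMesh) : TMesh := H.level H.M

/-- Two cells share a (horizontal or vertical) edge segment of positive length. -/
def EdgeAdjacent (c d : Rect) : Prop :=
  c ≠ d ∧ ∃ s : Set (ℝ × ℝ), (IsHorizSeg s ∨ IsVertSeg s) ∧ s ⊆ c.toSet ∩ d.toSet

/-- `c` is an isolated subdivided cell at step `k`: it is subdivided at step `k`, but no cell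
of the level-`k` mesh sharing a horizontal or vertical edge with it is subdivided then. -/
def IsIsolatedAt (H : HierMesh) (k : ℕ) (c : Rect) : Prop :=
  k < H.M ∧ c ∈ H.subdivided k ∧
    ∀ d ∈ (H.level k).cells, EdgeAdjacent c d → d ∉ H.subdivided k

/-- The isolated subdivided cells occurring in the construction of `H`. -/
def isoCells (H : HierMesh) : Set Rect := {c | ∃ k, IsIsolatedAt H k c}

/-- A regular T-mesh is crossing-vertex connected: any two distinct crossing vertices are
joined by a poly-line of axis-parallel mesh edges all of whose (corner) joints are crossing
vertices. -/
def IsCVConnected (T : TMesh) : Prop :=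
  ∀ u v : ℝ × ℝ, IsCrossingVertex T u → IsCrossingVertex T v → u ≠ v →
    ∃ (N : ℕ) (p : ℕ → ℝ × ℝ), p 0 = u ∧ p N = v ∧
      (∀ i < N, p i ≠ p (i + 1) ∧ segment ℝ (p i) (p (i + 1)) ⊆ T.skeleton ∧
        ((p i).1 = (p (i + 1)).1 ∨ (p i).2 = (p (i + 1)).2)) ∧
      (∀ i, 0 < i → i < N →
        (((p (i - 1)).2 = (p i).2 ∧ (p i).1 = (p (i + 1)).1) ∨
         ((p (i - 1)).1 = (p i).1 ∧ (p i).2 = (p (i + 1)).2)) →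
        IsCrossingVertex T (p i))

/-- The level of an l-edge `s`: the first level of the hierarchy whose skeleton contains it. -/
def LEdgeLevel (H : HierMesh) (s : Set (ℝ × ℝ)) (k : ℕ) : Prop :=
  s ⊆ (H.level k).skeleton ∧ ∀ j < k, ¬ s ⊆ (H.level j).skeleton

/-- `yb < yi < yt` are the heights of the two support l-edges of the horizontal l-edge
`[a,b] × {yi}` of the hierarchical mesh `H`: for a level-0 l-edge, the nearest level-0
horizontal l-edges below and above; for a level-`(k+1)` l-edge, the heights of the bottom
and top edges of a cell subdivided at step `k` whose inserted cross has its horizontal arm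
on the l-edge. -/
def SupportHeights (H : HierMesh) (a b yi yb yt : ℝ) : Prop :=
  yb < yi ∧ yi < yt ∧
  ((LEdgeLevel H (Set.Icc a b ×ˢ ({yi} : Set ℝ)) 0 ∧
     (∃ a' b', HorizLEdgeAt (H.level 0) a' b' yb) ∧
     (∃ a' b', HorizLEdgeAt (H.level 0) a' b' yt) ∧
     (∀ y a' b', HorizLEdgeAt (H.level 0) a' b' y → ¬(yb < y ∧ y < yt ∧ y ≠ yi))) ∨
   (∃ k, LEdgeLevel H (Set.Icc a b ×ˢ ({yi} : Set ℝ)) (k + 1) ∧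
     ∃ c ∈ H.subdivided k, c.ymin = yb ∧ c.ymax = yt ∧ (c.ymin + c.ymax) / 2 = yi ∧
       a ≤ c.xmin ∧ c.xmax ≤ b))

/-- `U j` is a proper submesh of `U i` (its region is strictly contained in that of `U i`). -/
def ProperSubmesh {ι : Type*} (U : ι → TMesh) (j i : ι) : Prop :=
  j ≠ i ∧ (U j).Omega ⊆ (U i).Omega ∧ (U j).Omega ≠ (U i).Omega

/-! The CVR graph. -/

/-- An edge of the CVR graph: a segment joining two consecutive crossing vertices along an
l-edge. -/
def IsCVREdge (T : TMesh) (s : Set (ℝ × ℝ)) : Prop :=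
  ∃ u v : ℝ × ℝ, u ≠ v ∧ s = segment ℝ u v ∧ IsCrossingVertex T u ∧ IsCrossingVertex T v ∧
    (∃ l, IsLEdge T l ∧ segment ℝ u v ⊆ l) ∧
    ∀ w ∈ segment ℝ u v, IsCrossingVertex T w → w = u ∨ w = v

/-- The union of the edges of the CVR graph, as a plane set. -/
def cvrGraphSet (T : TMesh) : Set (ℝ × ℝ) := ⋃₀ {s | IsCVREdge T s}

/-- The number of edges of the CVR graph. -/
def cvrEdgeCount (T : TMesh) : ℕ := {s | IsCVREdge T s}.ncard

/-- The number of bounded faces of the CVR graph: bounded connected components of the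
complement of the union of its edges. -/
def cvrFaceCount (T : TMesh) : ℕ :=
  {U : Set (ℝ × ℝ) | (∃ p ∈ (cvrGraphSet T)ᶜ, U = connectedComponentIn (cvrGraphSet T)ᶜ p) ∧
     Bornology.IsBounded U}.ncard
namespace Lemma33

open Set

lemma rect_mem_toSet {c : Rect} {p : ℝ × ℝ} :
    p ∈ c.toSet ↔ c.xmin ≤ p.1 ∧ p.1 ≤ c.xmax ∧ c.ymin ≤ p.2 ∧ p.2 ≤ c.ymax := by
  exact ⟨fun h => ⟨h.1.1, h.1.2, h.2.1, h.2.2⟩, fun h => ⟨⟨h.1, h.2.1⟩, h.2.2.1, h.2.2.2⟩⟩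

lemma rect_isClosed (c : Rect) : IsClosed c.toSet :=
  (isClosed_Icc).prod isClosed_Icc

lemma rect_interior_toSet (c : Rect) :
    interior c.toSet = Ioo c.xmin c.xmax ×ˢ Ioo c.ymin c.ymax := by
  rw [Rect.toSet, interior_prod_eq, interior_Icc, interior_Icc]

lemma rect_mem_interior_toSet {c : Rect} {p : ℝ × ℝ} :
    p ∈ interior c.toSet ↔
      c.xmin < p.1 ∧ p.1 < c.xmax ∧ c.ymin < p.2 ∧ p.2 < c.ymax := by
  rw [rect_interior_toSet]
  simp [Set.mem_prod, and_assoc]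

lemma cell_subset_Omega {T : TMesh} {c : Rect} (hc : c ∈ T.cells) :
    c.toSet ⊆ T.Omega := by
  rw [TMesh.Omega, ← T.union_eq]
  exact Set.subset_biUnion_of_mem hc

lemma mem_Omega {T : TMesh} {p : ℝ × ℝ} :
    p ∈ T.Omega ↔ T.outer.xmin ≤ p.1 ∧ p.1 ≤ T.outer.xmax ∧
      T.outer.ymin ≤ p.2 ∧ p.2 ≤ T.outer.ymax := rect_mem_toSet

lemma mem_interior_Omega {T : TMesh} {p : ℝ × ℝ} :
    p ∈ interior T.Omega ↔ T.outer.xmin < p.1 ∧ p.1 < T.outer.xmax ∧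
      T.outer.ymin < p.2 ∧ p.2 < T.outer.ymax := rect_mem_interior_toSet

lemma skeleton_isClosed (T : TMesh) : IsClosed T.skeleton :=
  T.finite_cells.isClosed_biUnion fun _ _ => isClosed_frontier

lemma mem_skeleton_of {T : TMesh} {c : Rect} (hc : c ∈ T.cells) {p : ℝ × ℝ}
    (hp : p ∈ c.toSet) (hip : p ∉ interior c.toSet) : p ∈ T.skeleton := by
  refine Set.mem_biUnion hc ?_
  rw [(rect_isClosed c).frontier_eq]
  exact ⟨hp, hip⟩

lemma skeleton_subset_Omega (T : TMesh) : T.skeleton ⊆ T.Omega := by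
  intro p hp
  obtain ⟨c, hc, hpc⟩ := Set.mem_iUnion₂.1 hp
  have : p ∈ c.toSet := by
    have := frontier_subset_closure (s := c.toSet) hpc
    rwa [(rect_isClosed c).closure_eq] at this
  exact cell_subset_Omega hc this

lemma left_edge_subset {T : TMesh} {c : Rect} (hc : c ∈ T.cells) :
    ({c.xmin} : Set ℝ) ×ˢ Icc c.ymin c.ymax ⊆ T.skeleton := by
  rintro ⟨qx, qy⟩ ⟨hx, hy⟩
  simp only [Set.mem_singleton_iff] at hx
  subst hx
  refine mem_skeleton_of hc (rect_mem_toSet.2 ⟨le_rfl, c.hx.le, hy.1, hy.2⟩) ?_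
  rw [rect_mem_interior_toSet]
  exact fun h => absurd h.1 (lt_irrefl _)

lemma right_edge_subset {T : TMesh} {c : Rect} (hc : c ∈ T.cells) :
    ({c.xmax} : Set ℝ) ×ˢ Icc c.ymin c.ymax ⊆ T.skeleton := by
  rintro ⟨qx, qy⟩ ⟨hx, hy⟩
  simp only [Set.mem_singleton_iff] at hx
  subst hx
  refine mem_skeleton_of hc (rect_mem_toSet.2 ⟨c.hx.le, le_rfl, hy.1, hy.2⟩) ?_
  rw [rect_mem_interior_toSet]
  exact fun h => absurd h.2.1 (lt_irrefl _)

lemma bottom_edge_subset {T : TMesh} {c : Rect} (hc : c ∈ T.cells) :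
    Icc c.xmin c.xmax ×ˢ ({c.ymin} : Set ℝ) ⊆ T.skeleton := by
  rintro ⟨qx, qy⟩ ⟨hx, hy⟩
  simp only [Set.mem_singleton_iff] at hy
  subst hy
  refine mem_skeleton_of hc (rect_mem_toSet.2 ⟨hx.1, hx.2, le_rfl, c.hy.le⟩) ?_
  rw [rect_mem_interior_toSet]
  exact fun h => absurd h.2.2.1 (lt_irrefl _)

lemma top_edge_subset {T : TMesh} {c : Rect} (hc : c ∈ T.cells) :
    Icc c.xmin c.xmax ×ˢ ({c.ymax} : Set ℝ) ⊆ T.skeleton := by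
  rintro ⟨qx, qy⟩ ⟨hx, hy⟩
  simp only [Set.mem_singleton_iff] at hy
  subst hy
  refine mem_skeleton_of hc (rect_mem_toSet.2 ⟨hx.1, hx.2, c.hy.le, le_rfl⟩) ?_
  rw [rect_mem_interior_toSet]
  exact fun h => absurd h.2.2.2 (lt_irrefl _)

/-- A point strictly inside an interval, arbitrarily close to a given point of it. -/
lemma near_interior {a b x r : ℝ} (hab : a < b) (hx : x ∈ Icc a b) (hr : 0 < r) :
    ∃ y, y ∈ Ioo a b ∧ |y - x| < r := by
  obtain ⟨hax, hxb⟩ := hx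
  set m := (a + b) / 2 with hm
  set t := min (r / (b - a + 1)) 1 with ht
  have hba : 0 < b - a + 1 := by linarith
  have ht0 : 0 < t := lt_min (div_pos hr hba) one_pos
  have ht1 : t ≤ 1 := min_le_right _ _
  have htr : t * (b - a) < r := by
    have h1 : t ≤ r / (b - a + 1) := min_le_left _ _
    have h2 : t * (b - a) ≤ r / (b - a + 1) * (b - a) := by nlinarith
    have h3 : r / (b - a + 1) * (b - a) < r := by
      rw [div_mul_eq_mul_div, div_lt_iff₀ hba]
      nlinarith
    linarith
  refine ⟨x + t * (m - x), ⟨?_, ?_⟩, ?_⟩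
  · nlinarith
  · nlinarith
  · have : |x + t * (m - x) - x| = t * |m - x| := by
      rw [add_sub_cancel_left, abs_mul, abs_of_pos ht0]
    rw [this]
    have : |m - x| ≤ b - a := by
      rw [abs_le]; constructor <;> nlinarith
    nlinarith

/-- No skeleton point lies in the interior of a cell. -/
lemma not_mem_skeleton_of_mem_interior {T : TMesh} {c : Rect} (hc : c ∈ T.cells)
    {p : ℝ × ℝ} (hp : p ∈ interior c.toSet) : p ∉ T.skeleton := by
  intro hsk
  obtain ⟨d, hd, hpd⟩ := Set.mem_iUnion₂.1 hsk
  rw [(rect_isClosed d).frontier_eq] at hpd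
  obtain ⟨hpd1, hpd2⟩ := hpd
  obtain ⟨r, hr, hball⟩ := Metric.isOpen_iff.1 isOpen_interior p hp
  have hpd1' := rect_mem_toSet.1 hpd1
  obtain ⟨q1, hq1, hq1r⟩ := near_interior d.hx ⟨hpd1'.1, hpd1'.2.1⟩ hr
  obtain ⟨q2, hq2, hq2r⟩ := near_interior d.hy ⟨hpd1'.2.2.1, hpd1'.2.2.2⟩ hr
  have hqd : ((q1, q2) : ℝ × ℝ) ∈ interior d.toSet := by
    rw [rect_mem_interior_toSet]
    exact ⟨hq1.1, hq1.2, hq2.1, hq2.2⟩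
  have hqc : ((q1, q2) : ℝ × ℝ) ∈ interior c.toSet := by
    apply hball
    rw [Metric.mem_ball, Prod.dist_eq]
    simp only [Real.dist_eq]
    exact max_lt hq1r hq2r
  have hcd : c = d := by
    by_contra hne
    exact Set.disjoint_left.1 (T.pairwise_disjoint hc hd hne) hqc hqd
  subst hcd
  exact hpd2 hp

end Lemma33
namespace Lemma33

open Set

lemma exists_small (s : Finset ℝ) {b : ℝ} (hb : 0 < b) :
    ∃ t : ℝ, 0 < t ∧ t < b ∧ ∀ v ∈ s, 0 < v → t < v := by
  classical
  set s' : Finset ℝ := insert b (s.filter fun v => 0 < v) with hs'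
  have hbs' : b ∈ s' := by simp [hs']
  have hne : s'.Nonempty := ⟨b, hbs'⟩
  set m := s'.min' hne with hm
  have hmpos : 0 < m := by
    have hall : ∀ v ∈ s', 0 < v := by
      intro v hv
      rw [hs', Finset.mem_insert, Finset.mem_filter] at hv
      rcases hv with rfl | h
      · exact hb
      · exact h.2
    exact hall _ (s'.min'_mem hne)
  refine ⟨m / 2, by linarith, ?_, ?_⟩
  · have : m ≤ b := Finset.min'_le _ _ hbs'
    linarith
  · intro v hv hv0
    have : m ≤ v := Finset.min'_le _ _ (by
      rw [hs', Finset.mem_insert, Finset.mem_filter]; exact Or.inr ⟨hv, hv0⟩)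
    linarith

lemma interval_step {A B x σ t u : ℝ} (hσ : σ = 1 ∨ σ = -1)
    (h1 : A ≤ x + σ * t) (h2 : x + σ * t ≤ B)
    (hA : 0 < A - x → t < A - x) (hB : 0 < x - B → t < x - B)
    (hu : u ∈ Icc 0 t) : A ≤ x + σ * u ∧ x + σ * u ≤ B := by
  obtain ⟨hu0, hut⟩ := hu
  rcases hσ with h | h <;> subst h
  · constructor
    · by_contra hcon
      push_neg at hcon
      have := hA (by linarith)
      linarith
    · linarith
  · constructor
    · linarith
    · by_contra hcon
      push_neg at hcon
      have := hB (by linarith)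
      linarith

/-- In any "quadrant" direction from a point of `Ω` with some room, there is a cell
containing a small closed square touching the point. -/
lemma quadrant (T : TMesh) (p : ℝ × ℝ) {σ τ : ℝ} (hσ : σ = 1 ∨ σ = -1)
    (hτ : τ = 1 ∨ τ = -1) {b : ℝ} (hb : 0 < b)
    (hsq : ∀ u ∈ Icc (0:ℝ) b, ∀ v ∈ Icc (0:ℝ) b, ((p.1 + σ*u, p.2 + τ*v) : ℝ × ℝ) ∈ T.Omega) :
    ∃ c ∈ T.cells, ∃ t, 0 < t ∧ ∀ u ∈ Icc (0:ℝ) t, ∀ v ∈ Icc (0:ℝ) t,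
      ((p.1 + σ*u, p.2 + τ*v) : ℝ × ℝ) ∈ c.toSet := by
  classical
  set s : Finset ℝ := T.finite_cells.toFinset.biUnion (fun c =>
    {c.xmin - p.1, p.1 - c.xmax, c.ymin - p.2, p.2 - c.ymax}) with hs
  obtain ⟨t, ht0, htb, hts⟩ := exists_small s hb
  have hmem : ∀ c ∈ T.cells, ∀ v ∈ ({c.xmin - p.1, p.1 - c.xmax, c.ymin - p.2,
      p.2 - c.ymax} : Finset ℝ), v ∈ s := by
    intro c hc v hv
    rw [hs]
    exact Finset.mem_biUnion.2 ⟨c, T.finite_cells.mem_toFinset.2 hc, hv⟩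
  have hq : ((p.1 + σ*t, p.2 + τ*t) : ℝ × ℝ) ∈ T.Omega :=
    hsq t ⟨ht0.le, htb.le⟩ t ⟨ht0.le, htb.le⟩
  have hq2 : ((p.1 + σ*t, p.2 + τ*t) : ℝ × ℝ) ∈ ⋃ c ∈ T.cells, c.toSet := by
    rw [T.union_eq]; exact hq
  obtain ⟨c, hc, hqc⟩ := Set.mem_iUnion₂.1 hq2
  have hb1 := rect_mem_toSet.1 hqc
  refine ⟨c, hc, t, ht0, ?_⟩
  intro u hu v hv
  have hx := interval_step hσ hb1.1 hb1.2.1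
    (fun h => hts _ (hmem c hc _ (by simp)) h)
    (fun h => hts _ (hmem c hc _ (by simp)) h) hu
  have hy := interval_step hτ hb1.2.2.1 hb1.2.2.2
    (fun h => hts _ (hmem c hc _ (by simp)) h)
    (fun h => hts _ (hmem c hc _ (by simp)) h) hv
  exact rect_mem_toSet.2 ⟨hx.1, hx.2, hy.1, hy.2⟩

lemma segment_horiz {a b y : ℝ} (hab : a ≤ b) :
    segment ℝ ((a, y) : ℝ × ℝ) ((b, y) : ℝ × ℝ) = Icc a b ×ˢ ({y} : Set ℝ) := by
  rw [segment_eq_image']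
  ext q
  simp only [Set.mem_image, Set.mem_prod, Set.mem_Icc, Set.mem_singleton_iff]
  constructor
  · rintro ⟨θ, ⟨hθ0, hθ1⟩, rfl⟩
    refine ⟨⟨?_, ?_⟩, ?_⟩
    · show a ≤ a + θ * (b - a)
      nlinarith
    · show a + θ * (b - a) ≤ b
      nlinarith
    · show y + θ * (y - y) = y
      ring
  · rintro ⟨⟨h1, h2⟩, h3⟩
    rcases eq_or_lt_of_le hab with rfl | hlt
    · refine ⟨0, ⟨le_rfl, zero_le_one⟩, ?_⟩
      have hqa : q.1 = a := le_antisymm h2 h1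
      have hq : q = (q.1, q.2) := rfl
      rw [hq, hqa, h3]
      simp
    · refine ⟨(q.1 - a) / (b - a), ⟨div_nonneg (by linarith) (by linarith),
        (div_le_one (by linarith)).2 (by linarith)⟩, ?_⟩
      have hq : q = (q.1, q.2) := rfl
      rw [hq, h3, Prod.ext_iff]
      have hba : b - a ≠ 0 := by linarith
      constructor
      · show a + (q.1 - a) / (b - a) * (b - a) = q.1
        field_simp
        ring
      · show y + (q.1 - a) / (b - a) * (y - y) = y
        ring

lemma segment_vert {x a b : ℝ} (hab : a ≤ b) :
    segment ℝ ((x, a) : ℝ × ℝ) ((x, b) : ℝ × ℝ) = ({x} : Set ℝ) ×ˢ Icc a b := by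
  rw [segment_eq_image']
  ext q
  simp only [Set.mem_image, Set.mem_prod, Set.mem_Icc, Set.mem_singleton_iff]
  constructor
  · rintro ⟨θ, ⟨hθ0, hθ1⟩, rfl⟩
    refine ⟨?_, ?_, ?_⟩
    · show x + θ * (x - x) = x
      ring
    · show a ≤ a + θ * (b - a)
      nlinarith
    · show a + θ * (b - a) ≤ b
      nlinarith
  · rintro ⟨h3, h1, h2⟩
    rcases eq_or_lt_of_le hab with rfl | hlt
    · refine ⟨0, ⟨le_rfl, zero_le_one⟩, ?_⟩
      have hqa : q.2 = a := le_antisymm h2 h1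
      have hq : q = (q.1, q.2) := rfl
      rw [hq, hqa, h3]
      simp
    · refine ⟨(q.2 - a) / (b - a), ⟨div_nonneg (by linarith) (by linarith),
        (div_le_one (by linarith)).2 (by linarith)⟩, ?_⟩
      have hq : q = (q.1, q.2) := rfl
      rw [hq, h3, Prod.ext_iff]
      have hba : b - a ≠ 0 := by linarith
      constructor
      · show x + (q.2 - a) / (b - a) * (x - x) = x
        ring
      · show a + (q.2 - a) / (b - a) * (b - a) = q.2
        field_simp
        ring

lemma seg_right (p : ℝ × ℝ) {ε : ℝ} (hε : 0 ≤ ε) :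
    segment ℝ p (p + ((ε, 0) : ℝ × ℝ)) = Icc p.1 (p.1 + ε) ×ˢ ({p.2} : Set ℝ) := by
  have h1 : p + ((ε, 0) : ℝ × ℝ) = ((p.1 + ε, p.2) : ℝ × ℝ) := by
    rw [Prod.ext_iff]; simp
  rw [h1, ← Prod.mk.eta (p := p), segment_horiz (by linarith)]

lemma seg_left (p : ℝ × ℝ) {ε : ℝ} (hε : 0 ≤ ε) :
    segment ℝ p (p - ((ε, 0) : ℝ × ℝ)) = Icc (p.1 - ε) p.1 ×ˢ ({p.2} : Set ℝ) := by
  have h1 : p - ((ε, 0) : ℝ × ℝ) = ((p.1 - ε, p.2) : ℝ × ℝ) := by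
    rw [Prod.ext_iff]; simp
  rw [h1, ← Prod.mk.eta (p := p), segment_symm]
  have := segment_horiz (a := p.1 - ε) (b := p.1) (y := p.2) (by linarith)
  exact this

lemma seg_up (p : ℝ × ℝ) {ε : ℝ} (hε : 0 ≤ ε) :
    segment ℝ p (p + ((0, ε) : ℝ × ℝ)) = ({p.1} : Set ℝ) ×ˢ Icc p.2 (p.2 + ε) := by
  have h1 : p + ((0, ε) : ℝ × ℝ) = ((p.1, p.2 + ε) : ℝ × ℝ) := by
    rw [Prod.ext_iff]; simp
  rw [h1, ← Prod.mk.eta (p := p), segment_vert (by linarith)]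

lemma seg_down (p : ℝ × ℝ) {ε : ℝ} (hε : 0 ≤ ε) :
    segment ℝ p (p - ((0, ε) : ℝ × ℝ)) = ({p.1} : Set ℝ) ×ˢ Icc (p.2 - ε) p.2 := by
  have h1 : p - ((0, ε) : ℝ × ℝ) = ((p.1, p.2 - ε) : ℝ × ℝ) := by
    rw [Prod.ext_iff]; simp
  rw [h1, ← Prod.mk.eta (p := p), segment_symm]
  exact segment_vert (by linarith)

end Lemma33
namespace Lemma33

open Set

lemma mem_vseg {x' a b qx qy : ℝ} :
    ((qx, qy) : ℝ × ℝ) ∈ ({x'} : Set ℝ) ×ˢ Icc a b ↔ qx = x' ∧ a ≤ qy ∧ qy ≤ b :=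
  ⟨fun h => ⟨h.1, h.2.1, h.2.2⟩, fun h => ⟨h.1, h.2.1, h.2.2⟩⟩

lemma mem_hseg {a b y' qx qy : ℝ} :
    ((qx, qy) : ℝ × ℝ) ∈ Icc a b ×ˢ ({y'} : Set ℝ) ↔ (a ≤ qx ∧ qx ≤ b) ∧ qy = y' :=
  ⟨fun h => ⟨⟨h.1.1, h.1.2⟩, h.2⟩, fun h => ⟨⟨h.1.1, h.1.2⟩, h.2⟩⟩

/-- Every vertical segment inside the skeleton extends to a (maximal) l-edge. -/
lemma exists_vert_ledge (T : TMesh) {x y₁ y₂ : ℝ} (h12 : y₁ < y₂)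
    (hsub : ({x} : Set ℝ) ×ˢ Icc y₁ y₂ ⊆ T.skeleton) :
    ∃ A B : ℝ, A ≤ y₁ ∧ y₂ ≤ B ∧ IsLEdge T (({x} : Set ℝ) ×ˢ Icc A B) := by
  classical
  set S₁ : Set ℝ := {a | a ≤ y₁ ∧ ({x} : Set ℝ) ×ˢ Icc a y₂ ⊆ T.skeleton} with hS₁
  set S₂ : Set ℝ := {b | y₂ ≤ b ∧ ({x} : Set ℝ) ×ˢ Icc y₁ b ⊆ T.skeleton} with hS₂
  have h₁ : y₁ ∈ S₁ := ⟨le_rfl, hsub⟩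
  have h₂ : y₂ ∈ S₂ := ⟨le_rfl, hsub⟩
  have hbdd₁ : BddBelow S₁ := by
    refine ⟨T.outer.ymin, fun a ha => ?_⟩
    have : ((x, a) : ℝ × ℝ) ∈ T.skeleton := ha.2 (mem_vseg.2 ⟨rfl, le_rfl, le_of_lt (lt_of_le_of_lt ha.1 h12)⟩)
    exact (mem_Omega.1 (skeleton_subset_Omega T this)).2.2.1
  have hbdd₂ : BddAbove S₂ := by
    refine ⟨T.outer.ymax, fun b hb => ?_⟩
    have : ((x, b) : ℝ × ℝ) ∈ T.skeleton := hb.2 (mem_vseg.2 ⟨rfl, le_of_lt (lt_of_lt_of_le h12 hb.1), le_rfl⟩)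
    exact (mem_Omega.1 (skeleton_subset_Omega T this)).2.2.2
  set A := sInf S₁ with hA
  set B := sSup S₂ with hB
  have hA1 : A ≤ y₁ := csInf_le hbdd₁ h₁
  have hB2 : y₂ ≤ B := le_csSup hbdd₂ h₂
  have hAB : A < B := lt_of_le_of_lt hA1 (lt_of_lt_of_le h12 hB2)
  have key₁ : ∀ y : ℝ, A < y → y ≤ y₂ → ((x, y) : ℝ × ℝ) ∈ T.skeleton := by
    intro y hy1 hy2
    obtain ⟨a, ha, hay⟩ := (csInf_lt_iff hbdd₁ ⟨y₁, h₁⟩).1 hy1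
    exact ha.2 (mem_vseg.2 ⟨rfl, hay.le, hy2⟩)
  have key₂ : ∀ y : ℝ, y₁ ≤ y → y < B → ((x, y) : ℝ × ℝ) ∈ T.skeleton := by
    intro y hy1 hy2
    obtain ⟨b, hb, hby⟩ := (lt_csSup_iff hbdd₂ ⟨y₂, h₂⟩).1 hy2
    exact hb.2 (mem_vseg.2 ⟨rfl, hy1, hby.le⟩)
  have hAmem : ((x, A) : ℝ × ℝ) ∈ T.skeleton := by
    rw [← (skeleton_isClosed T).closure_eq]
    apply Metric.mem_closure_iff.2
    intro ε hε
    set y' := min (A + ε/2) y₂ with hy'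
    refine ⟨(x, y'), key₁ _ (lt_min (by linarith) (lt_of_le_of_lt hA1 h12)) (min_le_right _ _), ?_⟩
    rw [Prod.dist_eq]
    simp only [Real.dist_eq]
    have h1 : y' ≤ A + ε/2 := min_le_left _ _
    have h2 : A < y' := lt_min (by linarith) (lt_of_le_of_lt hA1 h12)
    have : |A - y'| < ε := by rw [abs_sub_comm]; rw [abs_of_pos (by linarith)]; linarith
    simp only [sub_self, abs_zero]
    exact max_lt hε this
  have hBmem : ((x, B) : ℝ × ℝ) ∈ T.skeleton := by
    rw [← (skeleton_isClosed T).closure_eq]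
    apply Metric.mem_closure_iff.2
    intro ε hε
    set y' := max (B - ε/2) y₁ with hy'
    refine ⟨(x, y'), key₂ _ (le_max_right _ _) (max_lt (by linarith) (lt_of_lt_of_le h12 hB2)), ?_⟩
    rw [Prod.dist_eq]
    simp only [Real.dist_eq]
    have h1 : B - ε/2 ≤ y' := le_max_left _ _
    have h2 : y' < B := max_lt (by linarith) (lt_of_lt_of_le h12 hB2)
    have : |B - y'| < ε := by rw [abs_of_pos (by linarith)]; linarith
    simp only [sub_self, abs_zero]
    exact max_lt hε this
  have hskel : ({x} : Set ℝ) ×ˢ Icc A B ⊆ T.skeleton := by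
    rintro ⟨qx, qy⟩ hq
    obtain ⟨rfl, hA', hB'⟩ := mem_vseg.1 hq
    rcases eq_or_lt_of_le hA' with rfl | hlt
    · exact hAmem
    rcases eq_or_lt_of_le hB' with rfl | hlt2
    · exact hBmem
    rcases le_or_gt qy y₂ with h' | h'
    · exact key₁ _ hlt h'
    · exact key₂ _ (le_of_lt (lt_trans h12 h')) hlt2
  refine ⟨A, B, hA1, hB2, Or.inr ⟨x, A, B, hAB, rfl⟩, hskel, ?_⟩
  intro s' hs' hsub' hss
  rcases hs' with ⟨a', b', y', hab', rfl⟩ | ⟨x', a', b', hab', rfl⟩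
  · exfalso
    have hA' := hss (mem_vseg.2 ⟨rfl, le_rfl, hAB.le⟩)
    have hB' := hss (mem_vseg.2 ⟨rfl, hAB.le, le_rfl⟩)
    have h1 := (mem_hseg.1 hA').2
    have h2 := (mem_hseg.1 hB').2
    rw [← h2] at h1
    exact absurd h1 (by linarith)
  · have hA' := hss (mem_vseg.2 ⟨rfl, le_rfl, hAB.le⟩)
    have hB' := hss (mem_vseg.2 ⟨rfl, hAB.le, le_rfl⟩)
    obtain ⟨hx1, ha1, hb1⟩ := mem_vseg.1 hA'
    obtain ⟨_, ha2, hb2⟩ := mem_vseg.1 hB'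
    subst hx1
    have haS : a' ∈ S₁ := by
      refine ⟨le_trans ha1 hA1, fun q hq => ?_⟩
      apply hsub'
      obtain ⟨qx, qy⟩ := q
      obtain ⟨rfl, hq1, hq2⟩ := mem_vseg.1 hq
      exact mem_vseg.2 ⟨rfl, hq1, le_trans hq2 (le_trans hB2 hb2)⟩
    have hbS : b' ∈ S₂ := by
      refine ⟨le_trans hB2 hb2, fun q hq => ?_⟩
      apply hsub'
      obtain ⟨qx, qy⟩ := q
      obtain ⟨rfl, hq1, hq2⟩ := mem_vseg.1 hq
      exact mem_vseg.2 ⟨rfl, le_trans (le_trans ha1 hA1) hq1, hq2⟩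
    have hAa : A ≤ a' := csInf_le hbdd₁ haS
    have hBb : b' ≤ B := le_csSup hbdd₂ hbS
    rw [le_antisymm ha1 hAa, le_antisymm hBb hb2]

/-- Every horizontal segment inside the skeleton extends to a (maximal) l-edge. -/
lemma exists_horiz_ledge (T : TMesh) {x₁ x₂ y : ℝ} (h12 : x₁ < x₂)
    (hsub : Icc x₁ x₂ ×ˢ ({y} : Set ℝ) ⊆ T.skeleton) :
    ∃ A B : ℝ, A ≤ x₁ ∧ x₂ ≤ B ∧ IsLEdge T (Icc A B ×ˢ ({y} : Set ℝ)) := by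
  classical
  set S₁ : Set ℝ := {a | a ≤ x₁ ∧ Icc a x₂ ×ˢ ({y} : Set ℝ) ⊆ T.skeleton} with hS₁
  set S₂ : Set ℝ := {b | x₂ ≤ b ∧ Icc x₁ b ×ˢ ({y} : Set ℝ) ⊆ T.skeleton} with hS₂
  have h₁ : x₁ ∈ S₁ := ⟨le_rfl, hsub⟩
  have h₂ : x₂ ∈ S₂ := ⟨le_rfl, hsub⟩
  have hbdd₁ : BddBelow S₁ := by
    refine ⟨T.outer.xmin, fun a ha => ?_⟩
    have : ((a, y) : ℝ × ℝ) ∈ T.skeleton := ha.2 (mem_hseg.2 ⟨⟨le_rfl, le_of_lt (lt_of_le_of_lt ha.1 h12)⟩, rfl⟩)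
    exact (mem_Omega.1 (skeleton_subset_Omega T this)).1
  have hbdd₂ : BddAbove S₂ := by
    refine ⟨T.outer.xmax, fun b hb => ?_⟩
    have : ((b, y) : ℝ × ℝ) ∈ T.skeleton := hb.2 (mem_hseg.2 ⟨⟨le_of_lt (lt_of_lt_of_le h12 hb.1), le_rfl⟩, rfl⟩)
    exact (mem_Omega.1 (skeleton_subset_Omega T this)).2.1
  set A := sInf S₁ with hA
  set B := sSup S₂ with hB
  have hA1 : A ≤ x₁ := csInf_le hbdd₁ h₁
  have hB2 : x₂ ≤ B := le_csSup hbdd₂ h₂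
  have hAB : A < B := lt_of_le_of_lt hA1 (lt_of_lt_of_le h12 hB2)
  have key₁ : ∀ t : ℝ, A < t → t ≤ x₂ → ((t, y) : ℝ × ℝ) ∈ T.skeleton := by
    intro t ht1 ht2
    obtain ⟨a, ha, hat⟩ := (csInf_lt_iff hbdd₁ ⟨x₁, h₁⟩).1 ht1
    exact ha.2 (mem_hseg.2 ⟨⟨hat.le, ht2⟩, rfl⟩)
  have key₂ : ∀ t : ℝ, x₁ ≤ t → t < B → ((t, y) : ℝ × ℝ) ∈ T.skeleton := by
    intro t ht1 ht2
    obtain ⟨b, hb, hbt⟩ := (lt_csSup_iff hbdd₂ ⟨x₂, h₂⟩).1 ht2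
    exact hb.2 (mem_hseg.2 ⟨⟨ht1, hbt.le⟩, rfl⟩)
  have hAmem : ((A, y) : ℝ × ℝ) ∈ T.skeleton := by
    rw [← (skeleton_isClosed T).closure_eq]
    apply Metric.mem_closure_iff.2
    intro ε hε
    set t' := min (A + ε/2) x₂ with ht'
    refine ⟨(t', y), key₁ _ (lt_min (by linarith) (lt_of_le_of_lt hA1 h12)) (min_le_right _ _), ?_⟩
    rw [Prod.dist_eq]
    simp only [Real.dist_eq]
    have h1 : t' ≤ A + ε/2 := min_le_left _ _
    have h2 : A < t' := lt_min (by linarith) (lt_of_le_of_lt hA1 h12)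
    have : |A - t'| < ε := by rw [abs_sub_comm]; rw [abs_of_pos (by linarith)]; linarith
    simp only [sub_self, abs_zero]
    exact max_lt this hε
  have hBmem : ((B, y) : ℝ × ℝ) ∈ T.skeleton := by
    rw [← (skeleton_isClosed T).closure_eq]
    apply Metric.mem_closure_iff.2
    intro ε hε
    set t' := max (B - ε/2) x₁ with ht'
    refine ⟨(t', y), key₂ _ (le_max_right _ _) (max_lt (by linarith) (lt_of_lt_of_le h12 hB2)), ?_⟩
    rw [Prod.dist_eq]
    simp only [Real.dist_eq]
    have h1 : B - ε/2 ≤ t' := le_max_left _ _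
    have h2 : t' < B := max_lt (by linarith) (lt_of_lt_of_le h12 hB2)
    have : |B - t'| < ε := by rw [abs_of_pos (by linarith)]; linarith
    simp only [sub_self, abs_zero]
    exact max_lt this hε
  have hskel : Icc A B ×ˢ ({y} : Set ℝ) ⊆ T.skeleton := by
    rintro ⟨qx, qy⟩ hq
    obtain ⟨⟨hA', hB'⟩, rfl⟩ := mem_hseg.1 hq
    rcases eq_or_lt_of_le hA' with rfl | hlt
    · exact hAmem
    rcases eq_or_lt_of_le hB' with rfl | hlt2
    · exact hBmem
    rcases le_or_gt qx x₂ with h' | h'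
    · exact key₁ _ hlt h'
    · exact key₂ _ (le_of_lt (lt_trans h12 h')) hlt2
  refine ⟨A, B, hA1, hB2, Or.inl ⟨A, B, y, hAB, rfl⟩, hskel, ?_⟩
  intro s' hs' hsub' hss
  rcases hs' with ⟨a', b', y', hab', rfl⟩ | ⟨x', a', b', hab', rfl⟩
  · have hA' := hss (mem_hseg.2 ⟨⟨le_rfl, hAB.le⟩, rfl⟩)
    have hB' := hss (mem_hseg.2 ⟨⟨hAB.le, le_rfl⟩, rfl⟩)
    obtain ⟨⟨ha1, hb1⟩, hy1⟩ := mem_hseg.1 hA'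
    obtain ⟨⟨ha2, hb2⟩, _⟩ := mem_hseg.1 hB'
    subst hy1
    have haS : a' ∈ S₁ := by
      refine ⟨le_trans ha1 hA1, fun q hq => ?_⟩
      apply hsub'
      obtain ⟨qx, qy⟩ := q
      obtain ⟨⟨hq1, hq2⟩, rfl⟩ := mem_hseg.1 hq
      exact mem_hseg.2 ⟨⟨hq1, le_trans hq2 (le_trans hB2 hb2)⟩, rfl⟩
    have hbS : b' ∈ S₂ := by
      refine ⟨le_trans hB2 hb2, fun q hq => ?_⟩
      apply hsub'
      obtain ⟨qx, qy⟩ := q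
      obtain ⟨⟨hq1, hq2⟩, rfl⟩ := mem_hseg.1 hq
      exact mem_hseg.2 ⟨⟨le_trans (le_trans ha1 hA1) hq1, hq2⟩, rfl⟩
    have hAa : A ≤ a' := csInf_le hbdd₁ haS
    have hBb : b' ≤ B := le_csSup hbdd₂ hbS
    rw [le_antisymm ha1 hAa, le_antisymm hBb hb2]
  · exfalso
    have hA' := hss (mem_hseg.2 ⟨⟨le_rfl, hAB.le⟩, rfl⟩)
    have hB' := hss (mem_hseg.2 ⟨⟨hAB.le, le_rfl⟩, rfl⟩)
    have h1 := (mem_vseg.1 hA').1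
    have h2 := (mem_vseg.1 hB').1
    rw [← h2] at h1
    exact absurd h1 (by linarith)

/-- A vertical l-edge does not extend below. -/
lemma vert_no_below {T : TMesh} {x A B : ℝ} (hAB : A < B)
    (h : IsLEdge T (({x} : Set ℝ) ×ˢ Icc A B)) {δ : ℝ} (hδ : 0 < δ) :
    ¬ (({x} : Set ℝ) ×ˢ Icc (A - δ) A ⊆ T.skeleton) := by
  intro hcon
  have hun : Icc (A - δ) A ∪ Icc A B = Icc (A - δ) B :=
    Set.Icc_union_Icc_eq_Icc (by linarith) hAB.le
  have hbig : ({x} : Set ℝ) ×ˢ Icc (A - δ) B ⊆ T.skeleton := by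
    rw [← hun, Set.prod_union]
    exact Set.union_subset hcon h.2.1
  have hmax := h.2.2 (({x} : Set ℝ) ×ˢ Icc (A - δ) B)
    (Or.inr ⟨x, A - δ, B, by linarith, rfl⟩) hbig
    (Set.prod_mono subset_rfl (Set.Icc_subset_Icc (by linarith) le_rfl))
  have : ((x, A - δ) : ℝ × ℝ) ∈ ({x} : Set ℝ) ×ˢ Icc A B := by
    rw [← hmax]
    exact mem_vseg.2 ⟨rfl, le_rfl, by linarith⟩
  have := (mem_vseg.1 this).2.1
  linarith

/-- A horizontal l-edge does not extend to the left. -/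
lemma horiz_no_left {T : TMesh} {A B y : ℝ} (hAB : A < B)
    (h : IsLEdge T (Icc A B ×ˢ ({y} : Set ℝ))) {δ : ℝ} (hδ : 0 < δ) :
    ¬ (Icc (A - δ) A ×ˢ ({y} : Set ℝ) ⊆ T.skeleton) := by
  intro hcon
  have hun : Icc (A - δ) A ∪ Icc A B = Icc (A - δ) B :=
    Set.Icc_union_Icc_eq_Icc (by linarith) hAB.le
  have hbig : Icc (A - δ) B ×ˢ ({y} : Set ℝ) ⊆ T.skeleton := by
    rw [← hun, Set.union_prod]
    exact Set.union_subset hcon h.2.1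
  have hmax := h.2.2 (Icc (A - δ) B ×ˢ ({y} : Set ℝ))
    (Or.inl ⟨A - δ, B, y, by linarith, rfl⟩) hbig
    (Set.prod_mono (Set.Icc_subset_Icc (by linarith) le_rfl) subset_rfl)
  have : ((A - δ, y) : ℝ × ℝ) ∈ Icc A B ×ˢ ({y} : Set ℝ) := by
    rw [← hmax]
    exact mem_hseg.2 ⟨⟨le_rfl, by linarith⟩, rfl⟩
  have := (mem_hseg.1 this).1.1
  linarith

/-- The start point (bottom / left endpoint) of a segment. -/
def E2P (s : Set (ℝ × ℝ)) : ℝ × ℝ := (sInf (Prod.fst '' s), sInf (Prod.snd '' s))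

lemma E2P_horiz {a b y : ℝ} (hab : a ≤ b) :
    E2P (Icc a b ×ˢ ({y} : Set ℝ)) = (a, y) := by
  unfold E2P
  rw [Set.fst_image_prod _ (Set.singleton_nonempty y),
    Set.snd_image_prod (Set.nonempty_Icc.2 hab), csInf_Icc hab, csInf_singleton]

lemma E2P_vert {x a b : ℝ} (hab : a ≤ b) :
    E2P (({x} : Set ℝ) ×ˢ Icc a b) = (x, a) := by
  unfold E2P
  rw [Set.fst_image_prod _ (Set.nonempty_Icc.2 hab),
    Set.snd_image_prod (Set.singleton_nonempty x), csInf_Icc hab, csInf_singleton]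

end Lemma33
namespace Lemma33

open Set

/-- An interior skeleton point admits a leftward or a downward skeleton segment. -/
lemma left_or_down (T : TMesh) {p : ℝ × ℝ} (hp : p ∈ interior T.Omega)
    (hsk : p ∈ T.skeleton)
    (hl : ¬ ∃ δ, 0 < δ ∧ Icc (p.1 - δ) p.1 ×ˢ ({p.2} : Set ℝ) ⊆ T.skeleton)
    (hd : ¬ ∃ δ, 0 < δ ∧ ({p.1} : Set ℝ) ×ˢ Icc (p.2 - δ) p.2 ⊆ T.skeleton) : False := by
  obtain ⟨hx1, hx2, hy1, hy2⟩ := mem_interior_Omega.1 hp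
  have hΩ := interior_subset hp
  obtain ⟨hox1, hox2, hoy1, hoy2⟩ := mem_Omega.1 hΩ
  have hb : 0 < min (p.1 - T.outer.xmin) (p.2 - T.outer.ymin) :=
    lt_min (by linarith) (by linarith)
  have hsq : ∀ u ∈ Icc (0:ℝ) (min (p.1 - T.outer.xmin) (p.2 - T.outer.ymin)),
      ∀ v ∈ Icc (0:ℝ) (min (p.1 - T.outer.xmin) (p.2 - T.outer.ymin)),
      ((p.1 + (-1)*u, p.2 + (-1)*v) : ℝ × ℝ) ∈ T.Omega := by
    intro u hu v hv
    have h1 : u ≤ p.1 - T.outer.xmin := le_trans hu.2 (min_le_left _ _)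
    have h2 : v ≤ p.2 - T.outer.ymin := le_trans hv.2 (min_le_right _ _)
    exact mem_Omega.2 ⟨show T.outer.xmin ≤ p.1 + (-1)*u by linarith,
      show p.1 + (-1)*u ≤ T.outer.xmax by linarith [hu.1],
      show T.outer.ymin ≤ p.2 + (-1)*v by linarith,
      show p.2 + (-1)*v ≤ T.outer.ymax by linarith [hv.1]⟩
  obtain ⟨c, hc, t, ht, hsqr⟩ := quadrant T p (Or.inr rfl) (Or.inr rfl) hb hsq
  have hcp : p ∈ c.toSet := by
    have h := hsqr 0 ⟨le_rfl, ht.le⟩ 0 ⟨le_rfl, ht.le⟩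
    have he : ((p.1 + (-1)*0, p.2 + (-1)*0) : ℝ × ℝ) = p := by
      rw [Prod.ext_iff]; norm_num
    rwa [he] at h
  have hcq : ((p.1 - t, p.2 - t) : ℝ × ℝ) ∈ c.toSet := by
    have h := hsqr t ⟨ht.le, le_rfl⟩ t ⟨ht.le, le_rfl⟩
    have he : ((p.1 + (-1)*t, p.2 + (-1)*t) : ℝ × ℝ) = ((p.1 - t, p.2 - t) : ℝ × ℝ) := by
      rw [Prod.ext_iff]; norm_num; constructor <;> ring
    rwa [he] at h
  obtain ⟨hb1, hb2, hb3, hb4⟩ := rect_mem_toSet.1 hcp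
  have hb1' : c.xmin ≤ p.1 - t := (rect_mem_toSet.1 hcq).1
  have hb2' : p.1 - t ≤ c.xmax := (rect_mem_toSet.1 hcq).2.1
  have hb3' : c.ymin ≤ p.2 - t := (rect_mem_toSet.1 hcq).2.2.1
  have hb4' : p.2 - t ≤ c.ymax := (rect_mem_toSet.1 hcq).2.2.2
  rcases eq_or_lt_of_le hb2 with hxe | hxl
  · refine hd ⟨t, ht, ?_⟩
    rintro ⟨qx, qy⟩ hq
    obtain ⟨rfl, hq1, hq2⟩ := mem_vseg.1 hq
    refine right_edge_subset hc (mem_vseg.2 ⟨hxe, ?_, ?_⟩)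
    · exact le_trans hb3' hq1
    · exact le_trans hq2 hb4
  rcases eq_or_lt_of_le hb4 with hye | hyl
  · refine hl ⟨t, ht, ?_⟩
    rintro ⟨qx, qy⟩ hq
    obtain ⟨⟨hq1, hq2⟩, rfl⟩ := mem_hseg.1 hq
    refine top_edge_subset hc (mem_hseg.2 ⟨⟨?_, ?_⟩, hye⟩)
    · exact le_trans hb1' hq1
    · exact le_trans hq2 hb2
  exact not_mem_skeleton_of_mem_interior hc
    (rect_mem_interior_toSet.2 ⟨by linarith, hxl, by linarith, hyl⟩) hsk

/-- If a skeleton point has no leftward skeleton segment (and room to the left and above),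
it has an upward one. -/
lemma up_of_no_left (T : TMesh) {p : ℝ × ℝ} (hΩ : p ∈ T.Omega) (hsk : p ∈ T.skeleton)
    (hx : T.outer.xmin < p.1) (hy : p.2 < T.outer.ymax)
    (hl : ¬ ∃ δ, 0 < δ ∧ Icc (p.1 - δ) p.1 ×ˢ ({p.2} : Set ℝ) ⊆ T.skeleton) :
    ∃ δ, 0 < δ ∧ ({p.1} : Set ℝ) ×ˢ Icc p.2 (p.2 + δ) ⊆ T.skeleton := by
  obtain ⟨hox1, hox2, hoy1, hoy2⟩ := mem_Omega.1 hΩ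
  have hb : 0 < min (p.1 - T.outer.xmin) (T.outer.ymax - p.2) :=
    lt_min (by linarith) (by linarith)
  have hsq : ∀ u ∈ Icc (0:ℝ) (min (p.1 - T.outer.xmin) (T.outer.ymax - p.2)),
      ∀ v ∈ Icc (0:ℝ) (min (p.1 - T.outer.xmin) (T.outer.ymax - p.2)),
      ((p.1 + (-1)*u, p.2 + 1*v) : ℝ × ℝ) ∈ T.Omega := by
    intro u hu v hv
    have h1 : u ≤ p.1 - T.outer.xmin := le_trans hu.2 (min_le_left _ _)
    have h2 : v ≤ T.outer.ymax - p.2 := le_trans hv.2 (min_le_right _ _)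
    exact mem_Omega.2 ⟨show T.outer.xmin ≤ p.1 + (-1)*u by linarith,
      show p.1 + (-1)*u ≤ T.outer.xmax by linarith [hu.1],
      show T.outer.ymin ≤ p.2 + 1*v by linarith [hv.1],
      show p.2 + 1*v ≤ T.outer.ymax by linarith⟩
  obtain ⟨c, hc, t, ht, hsqr⟩ := quadrant T p (Or.inr rfl) (Or.inl rfl) hb hsq
  have hcp : p ∈ c.toSet := by
    have h := hsqr 0 ⟨le_rfl, ht.le⟩ 0 ⟨le_rfl, ht.le⟩
    have he : ((p.1 + (-1)*0, p.2 + 1*0) : ℝ × ℝ) = p := by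
      rw [Prod.ext_iff]; norm_num
    rwa [he] at h
  have hcq : ((p.1 - t, p.2 + t) : ℝ × ℝ) ∈ c.toSet := by
    have h := hsqr t ⟨ht.le, le_rfl⟩ t ⟨ht.le, le_rfl⟩
    have he : ((p.1 + (-1)*t, p.2 + 1*t) : ℝ × ℝ) = ((p.1 - t, p.2 + t) : ℝ × ℝ) := by
      rw [Prod.ext_iff]; norm_num; ring
    rwa [he] at h
  obtain ⟨hb1, hb2, hb3, hb4⟩ := rect_mem_toSet.1 hcp
  have hb1' : c.xmin ≤ p.1 - t := (rect_mem_toSet.1 hcq).1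
  have hb2' : p.1 - t ≤ c.xmax := (rect_mem_toSet.1 hcq).2.1
  have hb3' : c.ymin ≤ p.2 + t := (rect_mem_toSet.1 hcq).2.2.1
  have hb4' : p.2 + t ≤ c.ymax := (rect_mem_toSet.1 hcq).2.2.2
  rcases eq_or_lt_of_le hb2 with hxe | hxl
  · refine ⟨t, ht, ?_⟩
    rintro ⟨qx, qy⟩ hq
    obtain ⟨rfl, hq1, hq2⟩ := mem_vseg.1 hq
    refine right_edge_subset hc (mem_vseg.2 ⟨hxe, le_trans hb3 hq1, le_trans hq2 hb4'⟩)
  rcases eq_or_lt_of_le hb3 with hye | hyl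
  · exfalso
    refine hl ⟨t, ht, ?_⟩
    rintro ⟨qx, qy⟩ hq
    obtain ⟨⟨hq1, hq2⟩, rfl⟩ := mem_hseg.1 hq
    exact bottom_edge_subset hc (mem_hseg.2 ⟨⟨le_trans hb1' hq1, le_trans hq2 hb2⟩, hye.symm⟩)
  · exfalso
    exact not_mem_skeleton_of_mem_interior hc
      (rect_mem_interior_toSet.2 ⟨by linarith, hxl, hyl, by linarith⟩) hsk

/-- If a skeleton point has no downward skeleton segment (and room below and to the right),
it has a rightward one. -/
lemma right_of_no_down (T : TMesh) {p : ℝ × ℝ} (hΩ : p ∈ T.Omega) (hsk : p ∈ T.skeleton)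
    (hx : p.1 < T.outer.xmax) (hy : T.outer.ymin < p.2)
    (hd : ¬ ∃ δ, 0 < δ ∧ ({p.1} : Set ℝ) ×ˢ Icc (p.2 - δ) p.2 ⊆ T.skeleton) :
    ∃ δ, 0 < δ ∧ Icc p.1 (p.1 + δ) ×ˢ ({p.2} : Set ℝ) ⊆ T.skeleton := by
  obtain ⟨hox1, hox2, hoy1, hoy2⟩ := mem_Omega.1 hΩ
  have hb : 0 < min (T.outer.xmax - p.1) (p.2 - T.outer.ymin) :=
    lt_min (by linarith) (by linarith)
  have hsq : ∀ u ∈ Icc (0:ℝ) (min (T.outer.xmax - p.1) (p.2 - T.outer.ymin)),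
      ∀ v ∈ Icc (0:ℝ) (min (T.outer.xmax - p.1) (p.2 - T.outer.ymin)),
      ((p.1 + 1*u, p.2 + (-1)*v) : ℝ × ℝ) ∈ T.Omega := by
    intro u hu v hv
    have h1 : u ≤ T.outer.xmax - p.1 := le_trans hu.2 (min_le_left _ _)
    have h2 : v ≤ p.2 - T.outer.ymin := le_trans hv.2 (min_le_right _ _)
    exact mem_Omega.2 ⟨show T.outer.xmin ≤ p.1 + 1*u by linarith [hu.1],
      show p.1 + 1*u ≤ T.outer.xmax by linarith,
      show T.outer.ymin ≤ p.2 + (-1)*v by linarith,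
      show p.2 + (-1)*v ≤ T.outer.ymax by linarith [hv.1]⟩
  obtain ⟨c, hc, t, ht, hsqr⟩ := quadrant T p (Or.inl rfl) (Or.inr rfl) hb hsq
  have hcp : p ∈ c.toSet := by
    have h := hsqr 0 ⟨le_rfl, ht.le⟩ 0 ⟨le_rfl, ht.le⟩
    have he : ((p.1 + 1*0, p.2 + (-1)*0) : ℝ × ℝ) = p := by
      rw [Prod.ext_iff]; norm_num
    rwa [he] at h
  have hcq : ((p.1 + t, p.2 - t) : ℝ × ℝ) ∈ c.toSet := by
    have h := hsqr t ⟨ht.le, le_rfl⟩ t ⟨ht.le, le_rfl⟩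
    have he : ((p.1 + 1*t, p.2 + (-1)*t) : ℝ × ℝ) = ((p.1 + t, p.2 - t) : ℝ × ℝ) := by
      rw [Prod.ext_iff]; norm_num; ring
    rwa [he] at h
  obtain ⟨hb1, hb2, hb3, hb4⟩ := rect_mem_toSet.1 hcp
  have hb1' : c.xmin ≤ p.1 + t := (rect_mem_toSet.1 hcq).1
  have hb2' : p.1 + t ≤ c.xmax := (rect_mem_toSet.1 hcq).2.1
  have hb3' : c.ymin ≤ p.2 - t := (rect_mem_toSet.1 hcq).2.2.1
  have hb4' : p.2 - t ≤ c.ymax := (rect_mem_toSet.1 hcq).2.2.2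
  rcases eq_or_lt_of_le hb4 with hye | hyl
  · refine ⟨t, ht, ?_⟩
    rintro ⟨qx, qy⟩ hq
    obtain ⟨⟨hq1, hq2⟩, rfl⟩ := mem_hseg.1 hq
    exact top_edge_subset hc (mem_hseg.2 ⟨⟨le_trans hb1 hq1, le_trans hq2 hb2'⟩, hye⟩)
  rcases eq_or_lt_of_le hb1 with hxe | hxl
  · exfalso
    refine hd ⟨t, ht, ?_⟩
    rintro ⟨qx, qy⟩ hq
    obtain ⟨rfl, hq1, hq2⟩ := mem_vseg.1 hq
    exact left_edge_subset hc (mem_vseg.2 ⟨hxe.symm, le_trans hb3' hq1, le_trans hq2 hb4⟩)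
  · exfalso
    exact not_mem_skeleton_of_mem_interior hc
      (rect_mem_interior_toSet.2 ⟨hxl, by linarith, by linarith, hyl⟩) hsk

/-- A point of `Ω` with room to the NE, which is either on the left boundary or has an
upward skeleton segment, and either on the bottom boundary or has a rightward skeleton
segment, is the bottom-left corner of some cell. -/
lemma NE_corner (T : TMesh) {p : ℝ × ℝ} (hΩ : p ∈ T.Omega)
    (hx : p.1 < T.outer.xmax) (hy : p.2 < T.outer.ymax)
    (hxm : p.1 = T.outer.xmin ∨ ∃ ε, 0 < ε ∧ ({p.1} : Set ℝ) ×ˢ Icc p.2 (p.2 + ε) ⊆ T.skeleton)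
    (hym : p.2 = T.outer.ymin ∨ ∃ ε, 0 < ε ∧ Icc p.1 (p.1 + ε) ×ˢ ({p.2} : Set ℝ) ⊆ T.skeleton) :
    ∃ c ∈ T.cells, c.xmin = p.1 ∧ c.ymin = p.2 := by
  obtain ⟨hox1, hox2, hoy1, hoy2⟩ := mem_Omega.1 hΩ
  have hb : 0 < min (T.outer.xmax - p.1) (T.outer.ymax - p.2) :=
    lt_min (by linarith) (by linarith)
  have hsq : ∀ u ∈ Icc (0:ℝ) (min (T.outer.xmax - p.1) (T.outer.ymax - p.2)),
      ∀ v ∈ Icc (0:ℝ) (min (T.outer.xmax - p.1) (T.outer.ymax - p.2)),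
      ((p.1 + 1*u, p.2 + 1*v) : ℝ × ℝ) ∈ T.Omega := by
    intro u hu v hv
    have h1 : u ≤ T.outer.xmax - p.1 := le_trans hu.2 (min_le_left _ _)
    have h2 : v ≤ T.outer.ymax - p.2 := le_trans hv.2 (min_le_right _ _)
    exact mem_Omega.2 ⟨show T.outer.xmin ≤ p.1 + 1*u by linarith [hu.1],
      show p.1 + 1*u ≤ T.outer.xmax by linarith,
      show T.outer.ymin ≤ p.2 + 1*v by linarith [hv.1],
      show p.2 + 1*v ≤ T.outer.ymax by linarith⟩
  obtain ⟨c, hc, t, ht, hsqr⟩ := quadrant T p (Or.inl rfl) (Or.inl rfl) hb hsq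
  have hcp : p ∈ c.toSet := by
    have h := hsqr 0 ⟨le_rfl, ht.le⟩ 0 ⟨le_rfl, ht.le⟩
    have he : ((p.1 + 1*0, p.2 + 1*0) : ℝ × ℝ) = p := by
      rw [Prod.ext_iff]; norm_num
    rwa [he] at h
  have hcq : ((p.1 + t, p.2 + t) : ℝ × ℝ) ∈ c.toSet := by
    have h := hsqr t ⟨ht.le, le_rfl⟩ t ⟨ht.le, le_rfl⟩
    have he : ((p.1 + 1*t, p.2 + 1*t) : ℝ × ℝ) = ((p.1 + t, p.2 + t) : ℝ × ℝ) := by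
      rw [Prod.ext_iff]; norm_num
    rwa [he] at h
  obtain ⟨hb1, hb2, hb3, hb4⟩ := rect_mem_toSet.1 hcp
  have hb1' : c.xmin ≤ p.1 + t := (rect_mem_toSet.1 hcq).1
  have hb2' : p.1 + t ≤ c.xmax := (rect_mem_toSet.1 hcq).2.1
  have hb3' : c.ymin ≤ p.2 + t := (rect_mem_toSet.1 hcq).2.2.1
  have hb4' : p.2 + t ≤ c.ymax := (rect_mem_toSet.1 hcq).2.2.2
  have hcΩ : ((c.xmin, c.ymin) : ℝ × ℝ) ∈ T.Omega := cell_subset_Omega hc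
    (rect_mem_toSet.2 ⟨le_rfl, c.hx.le, le_rfl, c.hy.le⟩)
  have hcΩ1 : T.outer.xmin ≤ c.xmin := (mem_Omega.1 hcΩ).1
  have hcΩ3 : T.outer.ymin ≤ c.ymin := (mem_Omega.1 hcΩ).2.2.1
  refine ⟨c, hc, ?_, ?_⟩
  · rcases hxm with h | ⟨ε, hε, hup⟩
    · exact le_antisymm hb1 (h ▸ hcΩ1)
    · by_contra hne
      have hlt : c.xmin < p.1 := lt_of_le_of_ne hb1 hne
      set s := min t ε / 2 with hs
      have hs0 : 0 < s := by positivity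
      have hst : s < t := by
        have : min t ε ≤ t := min_le_left _ _
        rw [hs]; linarith
      have hsε : s ≤ ε := by
        have : min t ε ≤ ε := min_le_right _ _
        rw [hs]; linarith
      have hint : ((p.1, p.2 + s) : ℝ × ℝ) ∈ interior c.toSet :=
        rect_mem_interior_toSet.2 ⟨hlt, show p.1 < c.xmax by linarith,
          show c.ymin < p.2 + s by linarith, show p.2 + s < c.ymax by linarith⟩
      have hskp : ((p.1, p.2 + s) : ℝ × ℝ) ∈ T.skeleton :=
        hup (mem_vseg.2 ⟨rfl, by linarith, by linarith⟩)
      exact not_mem_skeleton_of_mem_interior hc hint hskp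
  · rcases hym with h | ⟨ε, hε, hri⟩
    · exact le_antisymm hb3 (h ▸ hcΩ3)
    · by_contra hne
      have hlt : c.ymin < p.2 := lt_of_le_of_ne hb3 hne
      set s := min t ε / 2 with hs
      have hs0 : 0 < s := by positivity
      have hst : s < t := by
        have : min t ε ≤ t := min_le_left _ _
        rw [hs]; linarith
      have hsε : s ≤ ε := by
        have : min t ε ≤ ε := min_le_right _ _
        rw [hs]; linarith
      have hint : ((p.1 + s, p.2) : ℝ × ℝ) ∈ interior c.toSet :=
        rect_mem_interior_toSet.2 ⟨show c.xmin < p.1 + s by linarith,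
          show p.1 + s < c.xmax by linarith, hlt, show p.2 < c.ymax by linarith⟩
      have hskp : ((p.1 + s, p.2) : ℝ × ℝ) ∈ T.skeleton :=
        hri (mem_hseg.2 ⟨⟨by linarith, by linarith⟩, rfl⟩)
      exact not_mem_skeleton_of_mem_interior hc hint hskp

end Lemma33
namespace Lemma33

open Set

lemma mem_frontier_Omega {T : TMesh} {p : ℝ × ℝ} :
    p ∈ frontier T.Omega ↔ p ∈ T.Omega ∧ p ∉ interior T.Omega := by
  have h : frontier T.Omega = T.Omega \ interior T.Omega := (rect_isClosed T.outer).frontier_eq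
  rw [h]
  exact Set.mem_diff p

lemma horiz_edge_bounds {T : TMesh} {a b y : ℝ} (hab : a < b)
    (hsk : Icc a b ×ˢ ({y} : Set ℝ) ⊆ T.skeleton) :
    T.outer.xmin ≤ a ∧ b ≤ T.outer.xmax ∧ T.outer.ymin ≤ y ∧ y ≤ T.outer.ymax := by
  have h1 : ((a, y) : ℝ × ℝ) ∈ T.Omega :=
    skeleton_subset_Omega T (hsk (mem_hseg.2 ⟨⟨le_rfl, hab.le⟩, rfl⟩))
  have h2 : ((b, y) : ℝ × ℝ) ∈ T.Omega :=
    skeleton_subset_Omega T (hsk (mem_hseg.2 ⟨⟨hab.le, le_rfl⟩, rfl⟩))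
  exact ⟨(mem_Omega.1 h1).1, (mem_Omega.1 h2).2.1, (mem_Omega.1 h1).2.2.1,
    (mem_Omega.1 h1).2.2.2⟩

lemma vert_edge_bounds {T : TMesh} {x a b : ℝ} (hab : a < b)
    (hsk : ({x} : Set ℝ) ×ˢ Icc a b ⊆ T.skeleton) :
    T.outer.ymin ≤ a ∧ b ≤ T.outer.ymax ∧ T.outer.xmin ≤ x ∧ x ≤ T.outer.xmax := by
  have h1 : ((x, a) : ℝ × ℝ) ∈ T.Omega :=
    skeleton_subset_Omega T (hsk (mem_vseg.2 ⟨rfl, le_rfl, hab.le⟩))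
  have h2 : ((x, b) : ℝ × ℝ) ∈ T.Omega :=
    skeleton_subset_Omega T (hsk (mem_vseg.2 ⟨rfl, hab.le, le_rfl⟩))
  exact ⟨(mem_Omega.1 h1).2.2.1, (mem_Omega.1 h2).2.2.2, (mem_Omega.1 h1).1,
    (mem_Omega.1 h1).2.1⟩

lemma horiz_interior_y {T : TMesh} {a b y : ℝ} (hab : a < b)
    (h : IsInteriorLEdge T (Icc a b ×ˢ ({y} : Set ℝ))) :
    T.outer.ymin < y ∧ y < T.outer.ymax := by
  obtain ⟨h1, h2, h3, h4⟩ := horiz_edge_bounds hab h.1.2.1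
  constructor
  · rcases eq_or_lt_of_le h3 with he | h'
    · exfalso
      apply h.2
      rintro ⟨qx, qy⟩ hq
      obtain ⟨⟨hq1, hq2⟩, rfl⟩ := mem_hseg.1 hq
      rw [mem_frontier_Omega]
      refine ⟨mem_Omega.2 ⟨le_trans h1 hq1, le_trans hq2 h2, h3, h4⟩, ?_⟩
      rw [mem_interior_Omega]
      rintro ⟨_, _, hcon, _⟩
      rw [← he] at hcon
      exact absurd hcon (lt_irrefl _)
    · exact h'
  · rcases eq_or_lt_of_le h4 with he | h'
    · exfalso
      apply h.2
      rintro ⟨qx, qy⟩ hq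
      obtain ⟨⟨hq1, hq2⟩, rfl⟩ := mem_hseg.1 hq
      rw [mem_frontier_Omega]
      refine ⟨mem_Omega.2 ⟨le_trans h1 hq1, le_trans hq2 h2, h3, h4⟩, ?_⟩
      rw [mem_interior_Omega]
      rintro ⟨_, _, _, hcon⟩
      rw [he] at hcon
      exact absurd hcon (lt_irrefl _)
    · exact h'

lemma vert_interior_x {T : TMesh} {x a b : ℝ} (hab : a < b)
    (h : IsInteriorLEdge T (({x} : Set ℝ) ×ˢ Icc a b)) :
    T.outer.xmin < x ∧ x < T.outer.xmax := by
  obtain ⟨h1, h2, h3, h4⟩ := vert_edge_bounds hab h.1.2.1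
  constructor
  · rcases eq_or_lt_of_le h3 with he | h'
    · exfalso
      apply h.2
      rintro ⟨qx, qy⟩ hq
      obtain ⟨rfl, hq1, hq2⟩ := mem_vseg.1 hq
      rw [mem_frontier_Omega]
      refine ⟨mem_Omega.2 ⟨h3, h4, le_trans h1 hq1, le_trans hq2 h2⟩, ?_⟩
      rw [mem_interior_Omega]
      rintro ⟨hcon, _, _, _⟩
      rw [← he] at hcon
      exact absurd hcon (lt_irrefl _)
    · exact h'
  · rcases eq_or_lt_of_le h4 with he | h'
    · exfalso
      apply h.2
      rintro ⟨qx, qy⟩ hq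
      obtain ⟨rfl, hq1, hq2⟩ := mem_vseg.1 hq
      rw [mem_frontier_Omega]
      refine ⟨mem_Omega.2 ⟨h3, h4, le_trans h1 hq1, le_trans hq2 h2⟩, ?_⟩
      rw [mem_interior_Omega]
      rintro ⟨_, hcon, _, _⟩
      rw [he] at hcon
      exact absurd hcon (lt_irrefl _)
    · exact h'

lemma horiz_mk_interior {T : TMesh} {a b y : ℝ} (hab : a < b)
    (hy1 : T.outer.ymin < y) (hy2 : y < T.outer.ymax)
    (hE : IsLEdge T (Icc a b ×ˢ ({y} : Set ℝ))) :
    IsInteriorLEdge T (Icc a b ×ˢ ({y} : Set ℝ)) := by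
  refine ⟨hE, fun hcon => ?_⟩
  obtain ⟨h1, h2, _, _⟩ := horiz_edge_bounds hab hE.2.1
  set m := (a + b) / 2 with hm
  have hmm : ((m, y) : ℝ × ℝ) ∈ Icc a b ×ˢ ({y} : Set ℝ) :=
    mem_hseg.2 ⟨⟨by rw [hm]; linarith, by rw [hm]; linarith⟩, rfl⟩
  have := mem_frontier_Omega.1 (hcon hmm)
  exact this.2 (mem_interior_Omega.2
    ⟨by rw [hm] at *; linarith, by rw [hm] at *; linarith, hy1, hy2⟩)

lemma vert_mk_interior {T : TMesh} {x a b : ℝ} (hab : a < b)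
    (hx1 : T.outer.xmin < x) (hx2 : x < T.outer.xmax)
    (hE : IsLEdge T (({x} : Set ℝ) ×ˢ Icc a b)) :
    IsInteriorLEdge T (({x} : Set ℝ) ×ˢ Icc a b) := by
  refine ⟨hE, fun hcon => ?_⟩
  obtain ⟨h1, h2, _, _⟩ := vert_edge_bounds hab hE.2.1
  set m := (a + b) / 2 with hm
  have hmm : ((x, m) : ℝ × ℝ) ∈ ({x} : Set ℝ) ×ˢ Icc a b :=
    mem_vseg.2 ⟨rfl, by rw [hm]; linarith, by rw [hm]; linarith⟩
  have := mem_frontier_Omega.1 (hcon hmm)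
  exact this.2 (mem_interior_Omega.2
    ⟨hx1, hx2, by rw [hm] at *; linarith, by rw [hm] at *; linarith⟩)

lemma crossing_segs {T : TMesh} {p : ℝ × ℝ} (h : IsCrossingVertex T p) :
    ∃ ε, 0 < ε ∧ Icc p.1 (p.1 + ε) ×ˢ ({p.2} : Set ℝ) ⊆ T.skeleton ∧
      Icc (p.1 - ε) p.1 ×ˢ ({p.2} : Set ℝ) ⊆ T.skeleton ∧
      ({p.1} : Set ℝ) ×ˢ Icc p.2 (p.2 + ε) ⊆ T.skeleton ∧
      ({p.1} : Set ℝ) ×ˢ Icc (p.2 - ε) p.2 ⊆ T.skeleton := by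
  obtain ⟨_, _, ε, hε, h1, h2, h3, h4⟩ := h
  refine ⟨ε, hε, ?_, ?_, ?_, ?_⟩
  · rw [← seg_right p hε.le]; exact h1
  · rw [← seg_left p hε.le]; exact h2
  · rw [← seg_up p hε.le]; exact h3
  · rw [← seg_down p hε.le]; exact h4

lemma crossing_mk {T : TMesh} {p : ℝ × ℝ} (h1 : IsVertexOf T p)
    (h2 : p ∈ interior T.Omega) {ε : ℝ} (hε : 0 < ε)
    (hr : Icc p.1 (p.1 + ε) ×ˢ ({p.2} : Set ℝ) ⊆ T.skeleton)
    (hl : Icc (p.1 - ε) p.1 ×ˢ ({p.2} : Set ℝ) ⊆ T.skeleton)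
    (hu : ({p.1} : Set ℝ) ×ˢ Icc p.2 (p.2 + ε) ⊆ T.skeleton)
    (hd : ({p.1} : Set ℝ) ×ˢ Icc (p.2 - ε) p.2 ⊆ T.skeleton) :
    IsCrossingVertex T p := by
  refine ⟨h1, h2, ε, hε, ?_, ?_, ?_, ?_⟩
  · rw [seg_right p hε.le]; exact hr
  · rw [seg_left p hε.le]; exact hl
  · rw [seg_up p hε.le]; exact hu
  · rw [seg_down p hε.le]; exact hd

lemma crossing_BL (T : TMesh) {p : ℝ × ℝ} (h : IsCrossingVertex T p) :
    ∃ c ∈ T.cells, c.xmin = p.1 ∧ c.ymin = p.2 := by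
  obtain ⟨ε, hε, hr, _, hu, _⟩ := crossing_segs h
  obtain ⟨_, hx2, _, hy2⟩ := mem_interior_Omega.1 h.2.1
  exact NE_corner T (interior_subset h.2.1) hx2 hy2 (Or.inr ⟨ε, hε, hu⟩)
    (Or.inr ⟨ε, hε, hr⟩)

lemma spH_BL (T : TMesh) {a b y : ℝ} (hab : a < b)
    (h : IsInteriorLEdge T (Icc a b ×ˢ ({y} : Set ℝ))) :
    ∃ c ∈ T.cells, c.xmin = a ∧ c.ymin = y := by
  have hskel := h.1.2.1
  obtain ⟨hba1, hba2, hba3, hba4⟩ := horiz_edge_bounds hab hskel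
  obtain ⟨hy1, hy2⟩ := horiz_interior_y hab h
  have hpmem : ((a, y) : ℝ × ℝ) ∈ T.skeleton := hskel (mem_hseg.2 ⟨⟨le_rfl, hab.le⟩, rfl⟩)
  have hpΩ : ((a, y) : ℝ × ℝ) ∈ T.Omega := skeleton_subset_Omega T hpmem
  have hx : a < T.outer.xmax := lt_of_lt_of_le hab hba2
  have hym : ∃ ε, 0 < ε ∧ Icc a (a + ε) ×ˢ ({y} : Set ℝ) ⊆ T.skeleton := by
    refine ⟨b - a, by linarith, ?_⟩
    have he : a + (b - a) = b := by ring
    rw [he]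
    exact hskel
  by_cases hax : a = T.outer.xmin
  · exact NE_corner T hpΩ hx hy2 (Or.inl hax) (Or.inr hym)
  · have hlt : T.outer.xmin < a := lt_of_le_of_ne hba1 (Ne.symm hax)
    have hl : ¬ ∃ δ, 0 < δ ∧ Icc (a - δ) a ×ˢ ({y} : Set ℝ) ⊆ T.skeleton := by
      rintro ⟨δ, hδ, hsb⟩
      exact horiz_no_left hab h.1 hδ hsb
    have hup := up_of_no_left T hpΩ hpmem hlt hy2 hl
    exact NE_corner T hpΩ hx hy2 (Or.inr hup) (Or.inr hym)

lemma spV_BL (T : TMesh) {x a b : ℝ} (hab : a < b)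
    (h : IsInteriorLEdge T (({x} : Set ℝ) ×ˢ Icc a b)) :
    ∃ c ∈ T.cells, c.xmin = x ∧ c.ymin = a := by
  have hskel := h.1.2.1
  obtain ⟨hba1, hba2, hba3, hba4⟩ := vert_edge_bounds hab hskel
  obtain ⟨hx1, hx2⟩ := vert_interior_x hab h
  have hpmem : ((x, a) : ℝ × ℝ) ∈ T.skeleton := hskel (mem_vseg.2 ⟨rfl, le_rfl, hab.le⟩)
  have hpΩ : ((x, a) : ℝ × ℝ) ∈ T.Omega := skeleton_subset_Omega T hpmem
  have hy : a < T.outer.ymax := lt_of_lt_of_le hab hba2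
  have hxm : ∃ ε, 0 < ε ∧ ({x} : Set ℝ) ×ˢ Icc a (a + ε) ⊆ T.skeleton := by
    refine ⟨b - a, by linarith, ?_⟩
    have he : a + (b - a) = b := by ring
    rw [he]
    exact hskel
  by_cases hay : a = T.outer.ymin
  · exact NE_corner T hpΩ hx2 hy (Or.inr hxm) (Or.inl hay)
  · have hlt : T.outer.ymin < a := lt_of_le_of_ne hba1 (Ne.symm hay)
    have hd : ¬ ∃ δ, 0 < δ ∧ ({x} : Set ℝ) ×ˢ Icc (a - δ) a ⊆ T.skeleton := by
      rintro ⟨δ, hδ, hsb⟩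
      exact vert_no_below hab h.1 hδ hsb
    have hri := right_of_no_down T hpΩ hpmem hx2 hlt hd
    exact NE_corner T hpΩ hx2 hy (Or.inr hxm) (Or.inr hri)

lemma corner_BL (T : TMesh) :
    ∃ c ∈ T.cells, c.xmin = T.outer.xmin ∧ c.ymin = T.outer.ymin := by
  have hΩ : ((T.outer.xmin, T.outer.ymin) : ℝ × ℝ) ∈ T.Omega :=
    mem_Omega.2 ⟨le_rfl, T.outer.hx.le, le_rfl, T.outer.hy.le⟩
  exact NE_corner T hΩ T.outer.hx T.outer.hy (Or.inl rfl) (Or.inl rfl)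

end Lemma33
namespace Lemma33

open Set

/-- Classification of bottom-left corners of cells other than the corner of `Ω`. -/
lemma BL_classify {T : TMesh} {c : Rect} (hc : c ∈ T.cells)
    (hne : ¬ (c.xmin = T.outer.xmin ∧ c.ymin = T.outer.ymin)) :
    IsCrossingVertex T ((c.xmin, c.ymin) : ℝ × ℝ) ∨
      ∃ s, IsInteriorLEdge T s ∧ E2P s = ((c.xmin, c.ymin) : ℝ × ℝ) := by
  have hcΩ : ((c.xmin, c.ymin) : ℝ × ℝ) ∈ T.Omega := cell_subset_Omega hc
    (rect_mem_toSet.2 ⟨le_rfl, c.hx.le, le_rfl, c.hy.le⟩)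
  have hcΩ' : ((c.xmax, c.ymax) : ℝ × ℝ) ∈ T.Omega := cell_subset_Omega hc
    (rect_mem_toSet.2 ⟨c.hx.le, le_rfl, c.hy.le, le_rfl⟩)
  have hcΩ1 : T.outer.xmin ≤ c.xmin := (mem_Omega.1 hcΩ).1
  have hcΩ3 : T.outer.ymin ≤ c.ymin := (mem_Omega.1 hcΩ).2.2.1
  have hcΩ2 : c.xmax ≤ T.outer.xmax := (mem_Omega.1 hcΩ').2.1
  have hcΩ4 : c.ymax ≤ T.outer.ymax := (mem_Omega.1 hcΩ').2.2.2
  have hx2 : c.xmin < T.outer.xmax := lt_of_lt_of_le c.hx hcΩ2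
  have hy2 : c.ymin < T.outer.ymax := lt_of_lt_of_le c.hy hcΩ4
  have hsk : ((c.xmin, c.ymin) : ℝ × ℝ) ∈ T.skeleton := by
    refine mem_skeleton_of hc (rect_mem_toSet.2 ⟨le_rfl, c.hx.le, le_rfl, c.hy.le⟩) ?_
    rw [rect_mem_interior_toSet]
    exact fun h => absurd h.1 (lt_irrefl _)
  by_cases hyb : c.ymin = T.outer.ymin
  · by_cases hxb : c.xmin = T.outer.xmin
    · exact absurd ⟨hxb, hyb⟩ hne
    · -- bottom boundary: the left edge of `c` extends to a vertical interior l-edge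
      obtain ⟨A, B, hA, hB, hE⟩ := exists_vert_ledge T c.hy (left_edge_subset hc)
      have hAB : A < B := lt_of_le_of_lt hA (lt_of_lt_of_le c.hy hB)
      have hbounds := vert_edge_bounds hAB hE.2.1
      have hAeq : A = c.ymin := le_antisymm hA (by rw [hyb]; exact hbounds.1)
      have hxlt : T.outer.xmin < c.xmin := lt_of_le_of_ne hcΩ1 (Ne.symm hxb)
      have hint := vert_mk_interior hAB hxlt hx2 hE
      exact Or.inr ⟨_, hint, by rw [E2P_vert hAB.le, hAeq]⟩
  · have hylt : T.outer.ymin < c.ymin := lt_of_le_of_ne hcΩ3 (Ne.symm hyb)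
    by_cases hxb : c.xmin = T.outer.xmin
    · -- left boundary: the bottom edge of `c` extends to a horizontal interior l-edge
      obtain ⟨A, B, hA, hB, hE⟩ := exists_horiz_ledge T c.hx (bottom_edge_subset hc)
      have hAB : A < B := lt_of_le_of_lt hA (lt_of_lt_of_le c.hx hB)
      have hbounds := horiz_edge_bounds hAB hE.2.1
      have hAeq : A = c.xmin := le_antisymm hA (by rw [hxb]; exact hbounds.1)
      have hint := horiz_mk_interior hAB hylt hy2 hE
      exact Or.inr ⟨_, hint, by rw [E2P_horiz hAB.le, hAeq]⟩
    · -- interior corner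
      have hxlt : T.outer.xmin < c.xmin := lt_of_le_of_ne hcΩ1 (Ne.symm hxb)
      have hpint : ((c.xmin, c.ymin) : ℝ × ℝ) ∈ interior T.Omega :=
        mem_interior_Omega.2 ⟨hxlt, hx2, hylt, hy2⟩
      by_cases hL : ∃ δ, 0 < δ ∧ Icc (c.xmin - δ) c.xmin ×ˢ ({c.ymin} : Set ℝ) ⊆ T.skeleton
      · by_cases hD : ∃ δ, 0 < δ ∧ ({c.xmin} : Set ℝ) ×ˢ Icc (c.ymin - δ) c.ymin ⊆ T.skeleton
        · -- crossing vertex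
          obtain ⟨δL, hδL, hsL⟩ := hL
          obtain ⟨δD, hδD, hsD⟩ := hD
          set ε := min (min δL δD) (min (c.xmax - c.xmin) (c.ymax - c.ymin)) with hεdef
          have hε : 0 < ε := lt_min (lt_min hδL hδD)
            (lt_min (by linarith [c.hx]) (by linarith [c.hy]))
          have hεL : ε ≤ δL := le_trans (min_le_left _ _) (min_le_left _ _)
          have hεD : ε ≤ δD := le_trans (min_le_left _ _) (min_le_right _ _)
          have hεx : ε ≤ c.xmax - c.xmin := le_trans (min_le_right _ _) (min_le_left _ _)
          have hεy : ε ≤ c.ymax - c.ymin := le_trans (min_le_right _ _) (min_le_right _ _)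
          refine Or.inl (crossing_mk ⟨c, hc, Or.inl rfl, Or.inl rfl⟩ hpint hε ?_ ?_ ?_ ?_)
          · rintro ⟨qx, qy⟩ hq
            obtain ⟨⟨hq1, hq2⟩, rfl⟩ := mem_hseg.1 hq
            exact bottom_edge_subset hc (mem_hseg.2 ⟨⟨hq1, by linarith⟩, rfl⟩)
          · rintro ⟨qx, qy⟩ hq
            obtain ⟨⟨hq1, hq2⟩, rfl⟩ := mem_hseg.1 hq
            exact hsL (mem_hseg.2 ⟨⟨by linarith, hq2⟩, rfl⟩)
          · rintro ⟨qx, qy⟩ hq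
            obtain ⟨rfl, hq1, hq2⟩ := mem_vseg.1 hq
            exact left_edge_subset hc (mem_vseg.2 ⟨rfl, hq1, by linarith⟩)
          · rintro ⟨qx, qy⟩ hq
            obtain ⟨rfl, hq1, hq2⟩ := mem_vseg.1 hq
            exact hsD (mem_vseg.2 ⟨rfl, by linarith, hq2⟩)
        · -- leftward but no downward: vertical interior l-edge starting here
          obtain ⟨A, B, hA, hB, hE⟩ := exists_vert_ledge T c.hy (left_edge_subset hc)
          have hAB : A < B := lt_of_le_of_lt hA (lt_of_lt_of_le c.hy hB)
          have hAeq : A = c.ymin := by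
            rcases eq_or_lt_of_le hA with he | hlt
            · exact he
            · exfalso
              refine hD ⟨c.ymin - A, by linarith, ?_⟩
              rintro ⟨qx, qy⟩ hq
              obtain ⟨rfl, hq1, hq2⟩ := mem_vseg.1 hq
              refine hE.2.1 (mem_vseg.2 ⟨rfl, by linarith, ?_⟩)
              exact le_trans hq2 (le_trans c.hy.le hB)
          have hint := vert_mk_interior hAB hxlt hx2 hE
          exact Or.inr ⟨_, hint, by rw [E2P_vert hAB.le, hAeq]⟩
      · by_cases hD : ∃ δ, 0 < δ ∧ ({c.xmin} : Set ℝ) ×ˢ Icc (c.ymin - δ) c.ymin ⊆ T.skeleton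
        · -- downward but no leftward: horizontal interior l-edge starting here
          obtain ⟨A, B, hA, hB, hE⟩ := exists_horiz_ledge T c.hx (bottom_edge_subset hc)
          have hAB : A < B := lt_of_le_of_lt hA (lt_of_lt_of_le c.hx hB)
          have hAeq : A = c.xmin := by
            rcases eq_or_lt_of_le hA with he | hlt
            · exact he
            · exfalso
              refine hL ⟨c.xmin - A, by linarith, ?_⟩
              rintro ⟨qx, qy⟩ hq
              obtain ⟨⟨hq1, hq2⟩, rfl⟩ := mem_hseg.1 hq
              refine hE.2.1 (mem_hseg.2 ⟨⟨by linarith, ?_⟩, rfl⟩)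
              exact le_trans hq2 (le_trans c.hx.le hB)
          have hint := horiz_mk_interior hAB hylt hy2 hE
          exact Or.inr ⟨_, hint, by rw [E2P_horiz hAB.le, hAeq]⟩
        · exact (left_or_down T hpint hsk hL hD).elim

lemma BL_inj (T : TMesh) :
    Set.InjOn (fun c : Rect => ((c.xmin, c.ymin) : ℝ × ℝ)) T.cells := by
  intro c hc d hd he
  simp only [Prod.mk.injEq] at he
  obtain ⟨he1, he2⟩ := he
  by_contra hne
  have h1 : (0:ℝ) < c.xmax - c.xmin := by linarith [c.hx]
  have h2 : (0:ℝ) < c.ymax - c.ymin := by linarith [c.hy]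
  have h3 : (0:ℝ) < d.xmax - d.xmin := by linarith [d.hx]
  have h4 : (0:ℝ) < d.ymax - d.ymin := by linarith [d.hy]
  set m := min (min (c.xmax - c.xmin) (c.ymax - c.ymin))
    (min (d.xmax - d.xmin) (d.ymax - d.ymin)) / 2 with hm
  have hm0 : 0 < m := by
    rw [hm]
    have := lt_min (lt_min h1 h2) (lt_min h3 h4)
    linarith
  have hm1 : m ≤ (c.xmax - c.xmin) / 2 := by
    rw [hm]
    have : min (min (c.xmax - c.xmin) (c.ymax - c.ymin))
        (min (d.xmax - d.xmin) (d.ymax - d.ymin)) ≤ c.xmax - c.xmin :=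
      le_trans (min_le_left _ _) (min_le_left _ _)
    linarith
  have hm2 : m ≤ (c.ymax - c.ymin) / 2 := by
    rw [hm]
    have : min (min (c.xmax - c.xmin) (c.ymax - c.ymin))
        (min (d.xmax - d.xmin) (d.ymax - d.ymin)) ≤ c.ymax - c.ymin :=
      le_trans (min_le_left _ _) (min_le_right _ _)
    linarith
  have hm3 : m ≤ (d.xmax - d.xmin) / 2 := by
    rw [hm]
    have : min (min (c.xmax - c.xmin) (c.ymax - c.ymin))
        (min (d.xmax - d.xmin) (d.ymax - d.ymin)) ≤ d.xmax - d.xmin :=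
      le_trans (min_le_right _ _) (min_le_left _ _)
    linarith
  have hm4 : m ≤ (d.ymax - d.ymin) / 2 := by
    rw [hm]
    have : min (min (c.xmax - c.xmin) (c.ymax - c.ymin))
        (min (d.xmax - d.xmin) (d.ymax - d.ymin)) ≤ d.ymax - d.ymin :=
      le_trans (min_le_right _ _) (min_le_right _ _)
    linarith
  have hqc : ((c.xmin + m, c.ymin + m) : ℝ × ℝ) ∈ interior c.toSet :=
    rect_mem_interior_toSet.2 ⟨show c.xmin < c.xmin + m by linarith,
      show c.xmin + m < c.xmax by linarith, show c.ymin < c.ymin + m by linarith,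
      show c.ymin + m < c.ymax by linarith⟩
  have hqd : ((c.xmin + m, c.ymin + m) : ℝ × ℝ) ∈ interior d.toSet :=
    rect_mem_interior_toSet.2 ⟨show d.xmin < c.xmin + m by rw [← he1]; linarith,
      show c.xmin + m < d.xmax by rw [he1]; linarith,
      show d.ymin < c.ymin + m by rw [← he2]; linarith,
      show c.ymin + m < d.ymax by rw [he2]; linarith⟩
  exact Set.disjoint_left.1 (T.pairwise_disjoint hc hd hne) hqc hqd

lemma E2P_injOn (T : TMesh) : Set.InjOn E2P {s | IsInteriorLEdge T s} := by
  intro s₁ h₁ s₂ h₂ he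
  simp only [Set.mem_setOf_eq] at h₁ h₂
  rcases h₁.1.1 with ⟨a₁, b₁, y₁, hab₁, rfl⟩ | ⟨x₁, a₁, b₁, hab₁, rfl⟩ <;>
    rcases h₂.1.1 with ⟨a₂, b₂, y₂, hab₂, rfl⟩ | ⟨x₂, a₂, b₂, hab₂, rfl⟩
  · -- horiz, horiz
    rw [E2P_horiz hab₁.le, E2P_horiz hab₂.le, Prod.mk.injEq] at he
    obtain ⟨rfl, rfl⟩ := he
    rcases le_total b₁ b₂ with hb | hb
    · exact (h₁.1.2.2 _ (Or.inl ⟨a₁, b₂, y₁, hab₂, rfl⟩) h₂.1.2.1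
        (Set.prod_mono (Set.Icc_subset_Icc le_rfl hb) subset_rfl)).symm
    · exact h₂.1.2.2 _ (Or.inl ⟨a₁, b₁, y₁, hab₁, rfl⟩) h₁.1.2.1
        (Set.prod_mono (Set.Icc_subset_Icc le_rfl hb) subset_rfl)
  · -- horiz, vert
    exfalso
    rw [E2P_horiz hab₁.le, E2P_vert hab₂.le, Prod.mk.injEq] at he
    obtain ⟨hxe, hye⟩ := he
    subst hxe; subst hye
    have hy := horiz_interior_y hab₁ h₁
    have hx := vert_interior_x hab₂ h₂
    have hpint : ((a₁, y₁) : ℝ × ℝ) ∈ interior T.Omega :=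
      mem_interior_Omega.2 ⟨hx.1, hx.2, hy.1, hy.2⟩
    have hskp : ((a₁, y₁) : ℝ × ℝ) ∈ T.skeleton :=
      h₁.1.2.1 (mem_hseg.2 ⟨⟨le_rfl, hab₁.le⟩, rfl⟩)
    refine left_or_down T hpint hskp ?_ ?_
    · rintro ⟨δ, hδ, hsb⟩
      exact horiz_no_left hab₁ h₁.1 hδ hsb
    · rintro ⟨δ, hδ, hsb⟩
      exact vert_no_below hab₂ h₂.1 hδ hsb
  · -- vert, horiz
    exfalso
    rw [E2P_vert hab₁.le, E2P_horiz hab₂.le, Prod.mk.injEq] at he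
    obtain ⟨hxe, hye⟩ := he
    subst hxe; subst hye
    have hy := horiz_interior_y hab₂ h₂
    have hx := vert_interior_x hab₁ h₁
    have hpint : ((x₁, a₁) : ℝ × ℝ) ∈ interior T.Omega :=
      mem_interior_Omega.2 ⟨hx.1, hx.2, hy.1, hy.2⟩
    have hskp : ((x₁, a₁) : ℝ × ℝ) ∈ T.skeleton :=
      h₁.1.2.1 (mem_vseg.2 ⟨rfl, le_rfl, hab₁.le⟩)
    refine left_or_down T hpint hskp ?_ ?_
    · rintro ⟨δ, hδ, hsb⟩
      exact horiz_no_left hab₂ h₂.1 hδ hsb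
    · rintro ⟨δ, hδ, hsb⟩
      exact vert_no_below hab₁ h₁.1 hδ hsb
  · -- vert, vert
    rw [E2P_vert hab₁.le, E2P_vert hab₂.le, Prod.mk.injEq] at he
    obtain ⟨rfl, rfl⟩ := he
    rcases le_total b₁ b₂ with hb | hb
    · exact (h₁.1.2.2 _ (Or.inr ⟨x₁, a₁, b₂, hab₂, rfl⟩) h₂.1.2.1
        (Set.prod_mono subset_rfl (Set.Icc_subset_Icc le_rfl hb))).symm
    · exact h₂.1.2.2 _ (Or.inr ⟨x₁, a₁, b₁, hab₁, rfl⟩) h₁.1.2.1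
        (Set.prod_mono subset_rfl (Set.Icc_subset_Icc le_rfl hb))

lemma notcross_of_sp (T : TMesh) {s : Set (ℝ × ℝ)} (hs : IsInteriorLEdge T s) :
    ¬ IsCrossingVertex T (E2P s) := by
  intro hcr
  obtain ⟨ε, hε, _, hl, _, hd⟩ := crossing_segs hcr
  rcases hs.1.1 with ⟨a, b, y, hab, rfl⟩ | ⟨x, a, b, hab, rfl⟩
  · rw [E2P_horiz hab.le] at hl
    exact horiz_no_left hab hs.1 hε hl
  · rw [E2P_vert hab.le] at hd
    exact vert_no_below hab hs.1 hε hd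

end Lemma33
/-- **Lemma 3.3.** For a regular T-mesh with `F` cells, `V⁺` crossing vertices and `E`
interior l-edges, `F = V⁺ + E + 1`. -/
theorem cells_eq_crossing_add_ledges_add_one (T : TMesh) :
    cellCount T = crossingCount T + interiorLEdgeCount T + 1 := by
  classical
  have hBeq : (fun c : Rect => ((c.xmin, c.ymin) : ℝ × ℝ)) '' T.cells =
      insert ((T.outer.xmin, T.outer.ymin) : ℝ × ℝ)
        ({p | IsCrossingVertex T p} ∪ Lemma33.E2P '' {s | IsInteriorLEdge T s}) := by
    apply Set.Subset.antisymm
    · rintro p ⟨c, hc, rfl⟩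
      by_cases hcor : c.xmin = T.outer.xmin ∧ c.ymin = T.outer.ymin
      · exact Set.mem_insert_iff.2 (Or.inl (Prod.ext_iff.2 ⟨hcor.1, hcor.2⟩))
      · rcases Lemma33.BL_classify hc hcor with h | ⟨s, hs, hq⟩
        · exact Set.mem_insert_iff.2 (Or.inr (Or.inl h))
        · exact Set.mem_insert_iff.2 (Or.inr (Or.inr ⟨s, hs, hq⟩))
    · rintro p hp
      rcases Set.mem_insert_iff.1 hp with rfl | hp
      · obtain ⟨c, hc, h1, h2⟩ := Lemma33.corner_BL T
        exact ⟨c, hc, Prod.ext_iff.2 ⟨h1, h2⟩⟩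
      rcases hp with hv | ⟨s, hs, rfl⟩
      · obtain ⟨c, hc, h1, h2⟩ := Lemma33.crossing_BL T hv
        exact ⟨c, hc, Prod.ext_iff.2 ⟨h1, h2⟩⟩
      · simp only [Set.mem_setOf_eq] at hs
        rcases hs.1.1 with ⟨a, b, y, hab, rfl⟩ | ⟨x, a, b, hab, rfl⟩
        · obtain ⟨c, hc, h1, h2⟩ := Lemma33.spH_BL T hab hs
          refine ⟨c, hc, ?_⟩
          rw [Lemma33.E2P_horiz hab.le]
          exact Prod.ext_iff.2 ⟨h1, h2⟩
        · obtain ⟨c, hc, h1, h2⟩ := Lemma33.spV_BL T hab hs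
          refine ⟨c, hc, ?_⟩
          rw [Lemma33.E2P_vert hab.le]
          exact Prod.ext_iff.2 ⟨h1, h2⟩
  have hBfin : ((fun c : Rect => ((c.xmin, c.ymin) : ℝ × ℝ)) '' T.cells).Finite :=
    T.finite_cells.image _
  have hVSsub : ({p | IsCrossingVertex T p} ∪ Lemma33.E2P '' {s | IsInteriorLEdge T s}) ⊆
      (fun c : Rect => ((c.xmin, c.ymin) : ℝ × ℝ)) '' T.cells := by
    rw [hBeq]
    exact Set.subset_insert _ _
  have hVSfin := hBfin.subset hVSsub
  have hVfin := hVSfin.subset Set.subset_union_left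
  have hSPfin := hVSfin.subset Set.subset_union_right
  have hESfin : {s | IsInteriorLEdge T s}.Finite :=
    Set.Finite.of_finite_image hSPfin (Lemma33.E2P_injOn T)
  have hcornot : ((T.outer.xmin, T.outer.ymin) : ℝ × ℝ) ∉
      ({p | IsCrossingVertex T p} ∪ Lemma33.E2P '' {s | IsInteriorLEdge T s}) := by
    rintro (hv | ⟨s, hs, heq⟩)
    · exact lt_irrefl _ (Lemma33.mem_interior_Omega.1 hv.2.1).1
    · simp only [Set.mem_setOf_eq] at hs
      rcases hs.1.1 with ⟨a, b, y, hab, rfl⟩ | ⟨x, a, b, hab, rfl⟩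
      · rw [Lemma33.E2P_horiz hab.le] at heq
        have h := (Lemma33.horiz_interior_y hab hs).1
        have hy : y = T.outer.ymin := (Prod.ext_iff.1 heq).2
        rw [hy] at h
        exact lt_irrefl _ h
      · rw [Lemma33.E2P_vert hab.le] at heq
        have h := (Lemma33.vert_interior_x hab hs).1
        have hx : x = T.outer.xmin := (Prod.ext_iff.1 heq).1
        rw [hx] at h
        exact lt_irrefl _ h
  have hdisj : Disjoint {p | IsCrossingVertex T p}
      (Lemma33.E2P '' {s | IsInteriorLEdge T s}) := by
    rw [Set.disjoint_left]
    rintro p hp ⟨s, hs, rfl⟩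
    exact Lemma33.notcross_of_sp T hs hp
  calc cellCount T = T.cells.ncard := rfl
    _ = ((fun c : Rect => ((c.xmin, c.ymin) : ℝ × ℝ)) '' T.cells).ncard :=
        (Set.ncard_image_of_injOn (Lemma33.BL_inj T)).symm
    _ = (insert ((T.outer.xmin, T.outer.ymin) : ℝ × ℝ)
        ({p | IsCrossingVertex T p} ∪ Lemma33.E2P '' {s | IsInteriorLEdge T s})).ncard := by
        rw [hBeq]
    _ = ({p | IsCrossingVertex T p} ∪
        Lemma33.E2P '' {s | IsInteriorLEdge T s}).ncard + 1 :=
        Set.ncard_insert_of_notMem hcornot hVSfin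
    _ = {p | IsCrossingVertex T p}.ncard +
        (Lemma33.E2P '' {s | IsInteriorLEdge T s}).ncard + 1 := by
        rw [Set.ncard_union_eq hdisj hVfin hSPfin]
    _ = crossingCount T + interiorLEdgeCount T + 1 := by
        rw [Set.ncard_image_of_injOn (Lemma33.E2P_injOn T)]
        rfl
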